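/- arXiv:2307.04175 — 5 statements merged into one kernel-verified Lean document; each statement's English description precedes it below -/
import Mathlib

section
/- Fix an integer n ≥ 1 and a multiplier λ, and suppose i is an index with i + 1 < m and φ(i,λ) ≥ φ(i+1,λ). Consider the feasible set of vectors x : Fin m → ℝ that are monotone nondecreasing, satisfy 0 ≤ x j ≤ 1 for all j, and satisfy n · ∑ j, q j · x j ≤ 1. Then there exists a maximizer x of ∑ j, q j · φ(j,λ) · x j over this feasible set with x i = x (i+1). -/
/-!
The objective is linear and the feasible set is a nonempty compact polytope, so a maximizer `x`
exists. Replacing both `x i` and `x (i+1)` by their `q`-weighted mean `t` keeps `x` monotone and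
`[0,1]`-valued and leaves `∑ q j x j` unchanged, while it changes the objective by
`(φ i - φ (i+1)) · q i · (t - x i) ≥ 0`; the pooled vector is therefore again a maximizer.
-/

open Finset

/-- A multiplier matrix: nonnegative, lower-triangular (`lam k j = 0` whenever `j > k`),
with each row `k` summing to `1` over `j ≤ k`. -/
def IsMultiplier {m : ℕ} (lam : Fin m → Fin m → ℝ) : Prop :=
  (∀ k j, 0 ≤ lam k j) ∧ (∀ k j : Fin m, k < j → lam k j = 0) ∧
  (∀ k, ∑ j ∈ Finset.Iic k, lam k j = 1)

/-- The virtual value `φ(i, λ) = v i − (1 / q i) · ∑_{k ≥ i} q k (v k − v i) λ k i`. -/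
noncomputable def phi {m : ℕ} (v q : Fin m → ℝ) (lam : Fin m → Fin m → ℝ) (i : Fin m) : ℝ :=
  v i - (1 / q i) * ∑ k ∈ Finset.Ici i, q k * (v k - v i) * lam k i

open Function

theorem Monotone.update_update_of_covBy {ι α : Type*} [LinearOrder ι] [Preorder α]
    {x : ι → α} (hx : Monotone x) {i i' : ι} (hii' : i ⋖ i') {t : α}
    (hit : x i ≤ t) (hti' : t ≤ x i') : Monotone (update (update x i t) i' t) := by
  set y := update (update x i t) i' t with hy
  have hpool : ∀ j, j = i ∨ j = i' → y j = t := by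
    rintro j (rfl | rfl)
    · rw [hy, update_of_ne hii'.lt.ne, update_self]
    · rw [hy, update_self]
  have hoff : ∀ j, ¬(j = i ∨ j = i') → y j = x j := fun j hj => by
    rw [not_or] at hj
    rw [hy, update_of_ne hj.2, update_of_ne hj.1]
  have hbelow : ∀ j ≤ i', y j ≤ t := fun j hj => by
    by_cases h : j = i ∨ j = i'
    · exact (hpool j h).le
    · rw [hoff j h]
      exact (hx (hii'.le_of_lt (hj.lt_of_ne (not_or.1 h).2))).trans hit
  have habove : ∀ k, i ≤ k → t ≤ y k := fun k hk => by
    by_cases h : k = i ∨ k = i'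
    · exact (hpool k h).ge
    · rw [hoff k h]
      exact hti'.trans (hx (hii'.ge_of_gt (hk.lt_of_ne' (not_or.1 h).1)))
  intro j k hjk
  by_cases hj : j = i ∨ j = i'
  · rw [hpool j hj]
    exact habove k (hj.elim (fun h => h ▸ hjk) fun h => hii'.le.trans (h ▸ hjk))
  by_cases hk : k = i ∨ k = i'
  · rw [hpool k hk]
    exact hbelow j (hk.elim (fun h => hjk.trans (h ▸ hii'.le)) fun h => h ▸ hjk)
  rw [hoff j hj, hoff k hk]
  exact hx hjk

section Pooling

variable {ι : Type*} [Fintype ι]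

def feasibleSet [Preorder ι] (q : ι → ℝ) (c : ℝ) : Set (ι → ℝ) :=
  {x | Monotone x ∧ (∀ j, 0 ≤ x j ∧ x j ≤ 1) ∧ c * ∑ j, q j * x j ≤ 1}

theorem isCompact_feasibleSet [Preorder ι] (q : ι → ℝ) (c : ℝ) :
    IsCompact (feasibleSet q c) := by
  have hset :
      feasibleSet q c = Set.Icc 0 1 ∩ ({x | Monotone x} ∩ {x | c * ∑ j, q j * x j ≤ 1}) := by
    ext x
    simp only [feasibleSet, Set.mem_ofPred_eq, Set.mem_inter_iff, Set.mem_Icc, Pi.le_def,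
      Pi.zero_apply, Pi.one_apply, forall_and]
    tauto
  have hbudget : Continuous fun x : ι → ℝ => c * ∑ j, q j * x j := by fun_prop
  rw [hset]
  exact isCompact_Icc.inter_right (isClosed_monotone.inter (isClosed_le hbudget continuous_const))

theorem zero_mem_feasibleSet [Preorder ι] (q : ι → ℝ) (c : ℝ) : 0 ∈ feasibleSet q c :=
  ⟨monotone_const, fun _ => ⟨le_rfl, zero_le_one⟩, by simp⟩

theorem exists_isMaxOn_feasibleSet [Preorder ι] (q : ι → ℝ) (c : ℝ) (g : ι → ℝ) :
    ∃ x ∈ feasibleSet q c, IsMaxOn (fun x => ∑ j, g j * x j) (feasibleSet q c) x :=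
  (isCompact_feasibleSet q c).exists_isMaxOn ⟨0, zero_mem_feasibleSet q c⟩ (by fun_prop)

theorem sum_mul_update [DecidableEq ι] (g x : ι → ℝ) (i : ι) (t : ℝ) :
    ∑ j, g j * update x i t j = ∑ j, g j * x j + g i * (t - x i) := by
  have hoff : ∀ j ∈ univ.erase i, g j * update x i t j = g j * x j := fun j hj => by
    rw [update_of_ne (ne_of_mem_erase hj)]
  rw [← sum_erase_add _ _ (mem_univ i), ← sum_erase_add _ _ (mem_univ i), sum_congr rfl hoff,
    update_self]
  ring

theorem exists_pooled_of_covBy [LinearOrder ι] {q w x : ι → ℝ} {c : ℝ}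
    (hx : x ∈ feasibleSet q c) {i i' : ι} (hii' : i ⋖ i') (hqi : 0 < q i) (hqi' : 0 < q i')
    (hw : w i' ≤ w i) :
    ∃ y ∈ feasibleSet q c, ∑ j, q j * w j * x j ≤ ∑ j, q j * w j * y j ∧ y i = y i' := by
  obtain ⟨hmono, hbound, hbudget⟩ := hx
  have hle : x i ≤ x i' := hmono hii'.le
  have hQ : 0 < q i + q i' := add_pos hqi hqi'
  set t := (q i * x i + q i' * x i') / (q i + q i') with ht
  have hit : x i ≤ t := (le_div_iff₀ hQ).2 (by nlinarith)
  have hti' : t ≤ x i' := (div_le_iff₀ hQ).2 (by nlinarith)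
  have hbalance : q i * (t - x i) + q i' * (t - x i') = 0 := by
    rw [ht]
    field_simp
    ring
  set y := update (update x i t) i' t with hy
  have hsum : ∀ g : ι → ℝ,
      ∑ j, g j * y j = ∑ j, g j * x j + (g i * (t - x i) + g i' * (t - x i')) := fun g => by
    rw [hy, sum_mul_update, sum_mul_update, update_of_ne hii'.lt.ne']
    ring
  have hvalues : ∀ j, y j = x j ∨ y j = t := fun j => by
    rw [hy]
    simp only [update_apply]
    split_ifs <;> simp
  refine ⟨y, ⟨hmono.update_update_of_covBy hii' hit hti', fun j => ?_, ?_⟩, ?_, ?_⟩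
  · rcases hvalues j with h | h <;> rw [h]
    · exact hbound j
    · exact ⟨(hbound i).1.trans hit, hti'.trans (hbound i').2⟩
  · rw [hsum, hbalance, add_zero]
    exact hbudget
  · have hgain : q i * w i * (t - x i) + q i' * w i' * (t - x i')
        = (w i - w i') * (q i * (t - x i)) := by
      linear_combination w i' * hbalance
    rw [hsum fun j => q j * w j, hgain]
    exact le_add_of_nonneg_right
      (mul_nonneg (sub_nonneg.2 hw) (mul_nonneg hqi.le (sub_nonneg.2 hit)))
  · rw [hy, update_self, update_of_ne hii'.lt.ne, update_self]

end Pooling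

theorem exists_maximizer_eq_of_phi_ge_general (m : ℕ) (v q : Fin m → ℝ)
    (hq : ∀ i, 0 < q i)
    (n : ℕ)
    (lam : Fin m → Fin m → ℝ)
    (i : Fin m) (hi : (i : ℕ) + 1 < m)
    (hphi : phi v q lam ⟨(i : ℕ) + 1, hi⟩ ≤ phi v q lam i) :
    ∃ x : Fin m → ℝ,
      (Monotone x ∧ (∀ j, 0 ≤ x j ∧ x j ≤ 1) ∧ (n : ℝ) * ∑ j, q j * x j ≤ 1) ∧
      (∀ x' : Fin m → ℝ,
        (Monotone x' ∧ (∀ j, 0 ≤ x' j ∧ x' j ≤ 1) ∧ (n : ℝ) * ∑ j, q j * x' j ≤ 1) →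
        ∑ j, q j * phi v q lam j * x' j ≤ ∑ j, q j * phi v q lam j * x j) ∧
      x i = x ⟨(i : ℕ) + 1, hi⟩ := by
  obtain ⟨x, hx, hxmax⟩ := exists_isMaxOn_feasibleSet q n fun j => q j * phi v q lam j
  obtain ⟨y, hy, hxy, hyeq⟩ :=
    exists_pooled_of_covBy hx (Fin.covBy_iff.2 (Order.covBy_add_one _)) (hq i) (hq _) hphi
  exact ⟨y, hy, fun x' hx' => (hxmax hx').trans hxy, hyeq⟩

/-- If `φ(i, λ) ≥ φ(i+1, λ)` then the maximization of `∑ j, q j · φ(j,λ) · x j` over vectors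
`x` that are monotone, `[0,1]`-valued and satisfy `n · ∑ j, q j · x j ≤ 1` admits a maximizer
with `x i = x (i+1)`. -/
theorem exists_maximizer_eq_of_phi_ge (m : ℕ) (hm : 1 ≤ m) (v q : Fin m → ℝ)
    (hv0 : ∀ i, 0 ≤ v i) (hvmono : ∀ i j : Fin m, i < j → v i < v j)
    (hq : ∀ i, 0 < q i) (hqsum : ∑ i, q i = 1)
    (n : ℕ) (hn : 1 ≤ n)
    (lam : Fin m → Fin m → ℝ) (hlam : IsMultiplier lam)
    (i : Fin m) (hi : (i : ℕ) + 1 < m)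
    (hphi : phi v q lam ⟨(i : ℕ) + 1, hi⟩ ≤ phi v q lam i) :
    ∃ x : Fin m → ℝ,
      (Monotone x ∧ (∀ j, 0 ≤ x j ∧ x j ≤ 1) ∧ (n : ℝ) * ∑ j, q j * x j ≤ 1) ∧
      (∀ x' : Fin m → ℝ,
        (Monotone x' ∧ (∀ j, 0 ≤ x' j ∧ x' j ≤ 1) ∧ (n : ℝ) * ∑ j, q j * x' j ≤ 1) →
        ∑ j, q j * phi v q lam j * x' j ≤ ∑ j, q j * phi v q lam j * x j) ∧
      x i = x ⟨(i : ℕ) + 1, hi⟩ :=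
  exists_maximizer_eq_of_phi_ge_general m v q hq n lam i hi hphi
end

section
/- There exists an optimal multiplier λ (minimizing g over all multipliers) such that φ(i,λ) ≥ 0 for every index i. -/
open Finset

/-- An allocation vector: monotone nondecreasing with entries in `[0, 1]`. -/
def IsAlloc {m : ℕ} (x : Fin m → ℝ) : Prop :=
  Monotone x ∧ ∀ i, 0 ≤ x i ∧ x i ≤ 1

/-- `g(λ)` is the supremum over allocation vectors `x` of `∑ i, q i · φ(i, λ) · x i`. -/
noncomputable def g {m : ℕ} (v q : Fin m → ℝ) (lam : Fin m → Fin m → ℝ) : ℝ :=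
  sSup {s : ℝ | ∃ x : Fin m → ℝ, IsAlloc x ∧ s = ∑ i, q i * phi v q lam i * x i}

namespace OptMult

variable {m : ℕ} (v q : Fin m → ℝ)

/-- tail sum `S_t = ∑_{i ≥ t} q_i φ_i`. -/
noncomputable def Ssum (lam : Fin m → Fin m → ℝ) (t : ℕ) : ℝ :=
  ∑ i ∈ univ.filter (fun i : Fin m => t ≤ i.val), q i * phi v q lam i

lemma Ssum_of_ge (lam : Fin m → Fin m → ℝ) {t : ℕ} (ht : m ≤ t) : Ssum v q lam t = 0 := by
  unfold Ssum
  have h : univ.filter (fun i : Fin m => t ≤ i.val) = ∅ := by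
    ext i
    simp only [mem_filter, mem_univ, true_and, notMem_empty, iff_false, not_le]
    exact lt_of_lt_of_le i.isLt ht
  rw [h, sum_empty]

lemma isAlloc_step (t : ℕ) : IsAlloc (fun i : Fin m => if t ≤ i.val then (1:ℝ) else 0) := by
  constructor
  · intro a b hab
    dsimp only
    by_cases h : t ≤ a.val
    · rw [if_pos h, if_pos (le_trans h hab)]
    · by_cases h2 : t ≤ b.val <;> simp [h, h2]
  · intro i; dsimp only; split <;> norm_num

lemma sum_mul_step (lam : Fin m → Fin m → ℝ) (t : ℕ) :
    ∑ i, q i * phi v q lam i * (if t ≤ i.val then (1:ℝ) else 0) = Ssum v q lam t := by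
  rw [Ssum, sum_filter]
  refine sum_congr rfl fun i _ => ?_
  split <;> ring

lemma alloc_sum_le (lam : Fin m → Fin m → ℝ) (hm : 0 < m) {x : Fin m → ℝ} (hx : IsAlloc x)
    {M : ℝ} (hM : ∀ t, t ≤ m → Ssum v q lam t ≤ M) :
    ∑ i, q i * phi v q lam i * x i ≤ M := by
  have hM0 : 0 ≤ M := by
    have h := hM m le_rfl
    rwa [Ssum_of_ge v q lam le_rfl] at h
  have hmm : m - 1 < m := by omega
  set X : ℕ → ℝ := fun t => x ⟨min t (m-1), by omega⟩ with hX
  set d : ℕ → ℝ := fun t => if t = 0 then X 0 else X t - X (t-1) with hd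
  have hXmono : ∀ a b : ℕ, a ≤ b → X a ≤ X b := by
    intro a b hab
    exact hx.1 (by simp only [Fin.mk_le_mk]; omega)
  have hd0 : ∀ t, 0 ≤ d t := by
    intro t
    rw [hd]; dsimp only
    split
    · exact (hx.2 _).1
    · have h := hXmono (t-1) t (by omega); linarith
  have htel : ∀ n, ∑ t ∈ range (n+1), d t = X n := by
    intro n
    induction n with
    | zero => simp [hd]
    | succ n ih =>
        rw [sum_range_succ, ih, hd]
        dsimp only
        rw [if_neg (by omega)]
        simp only [Nat.add_sub_cancel]
        ring
  have hXval : ∀ i : Fin m, X i.val = x i := by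
    intro i
    have h : min i.val (m-1) = i.val := by have := i.isLt; omega
    simp only [hX, h, Fin.eta]
  calc ∑ i, q i * phi v q lam i * x i
      = ∑ i : Fin m, ∑ t ∈ range m, if t ≤ i.val then (q i * phi v q lam i) * d t else 0 := by
        refine sum_congr rfl fun i _ => ?_
        have hfil : (range m).filter (fun t => t ≤ i.val) = range (i.val+1) := by
          ext t
          simp only [mem_filter, mem_range]
          have := i.isLt; omega
        rw [← sum_filter, hfil, ← mul_sum, htel i.val, hXval i]
    _ = ∑ t ∈ range m, ∑ i : Fin m, if t ≤ i.val then (q i * phi v q lam i) * d t else 0 :=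
        sum_comm
    _ = ∑ t ∈ range m, d t * Ssum v q lam t := by
        refine sum_congr rfl fun t _ => ?_
        rw [Ssum, ← sum_filter, ← sum_mul, mul_comm]
    _ ≤ ∑ t ∈ range m, d t * M := by
        refine sum_le_sum fun t ht => ?_
        exact mul_le_mul_of_nonneg_left (hM t (le_of_lt (mem_range.1 ht))) (hd0 t)
    _ = (∑ t ∈ range m, d t) * M := by rw [sum_mul]
    _ ≤ 1 * M := by
        have h1 : ∑ t ∈ range m, d t = X (m-1) := by
          have h := htel (m-1)
          rwa [show m - 1 + 1 = m by omega] at h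
        rw [h1]
        refine mul_le_mul_of_nonneg_right ?_ hM0
        have h2 : X (m-1) = x ⟨m-1, hmm⟩ := by
          simp only [hX, min_self]
        rw [h2]; exact (hx.2 _).2
    _ = M := one_mul M

lemma range_ne (m : ℕ) : (range (m+1)).Nonempty := ⟨0, mem_range.2 (Nat.succ_pos m)⟩

lemma g_eq (hm : 0 < m) (lam : Fin m → Fin m → ℝ) :
    g v q lam = (range (m+1)).sup' (range_ne m) (Ssum v q lam) := by
  apply IsGreatest.csSup_eq
  constructor
  · obtain ⟨t₀, ht₀, heq⟩ := exists_mem_eq_sup' (range_ne m) (Ssum v q lam)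
    exact ⟨_, isAlloc_step t₀, by rw [heq, sum_mul_step]⟩
  · rintro s ⟨x, hx, rfl⟩
    exact alloc_sum_le v q lam hm hx
      (fun t ht => le_sup' (Ssum v q lam) (mem_range.2 (Nat.lt_succ_of_le ht)))


lemma continuous_phi (l : Fin m) :
    Continuous fun lam : Fin m → Fin m → ℝ => phi v q lam l := by
  unfold phi
  exact continuous_const.sub (continuous_const.mul (continuous_finset_sum _ fun k' _ =>
    continuous_const.mul ((continuous_apply l).comp (continuous_apply k'))))

lemma continuous_Ssum (t : ℕ) :
    Continuous fun lam : Fin m → Fin m → ℝ => Ssum v q lam t := by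
  unfold Ssum
  exact continuous_finset_sum _ fun i _ => continuous_const.mul (continuous_phi v q i)

lemma continuous_sup' {α : Type*} [TopologicalSpace α] {ι : Type*} (s : Finset ι)
    (hs : s.Nonempty) (f : ι → α → ℝ) (hf : ∀ i, Continuous (f i)) :
    Continuous fun x => s.sup' hs (fun i => f i x) :=
  Continuous.finset_sup'_apply hs (fun i _ => hf i)

lemma continuous_N :
    Continuous fun lam : Fin m → Fin m → ℝ => ∑ l, max 0 (-(phi v q lam l)) :=
  continuous_finset_sum _ fun l _ => continuous_const.max (continuous_phi v q l).neg

lemma isClosed_Kset : IsClosed {lam : Fin m → Fin m → ℝ | IsMultiplier lam} := by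
  have e1 : Continuous fun lam : Fin m → Fin m → ℝ => lam := continuous_id
  have h1 : IsClosed {lam : Fin m → Fin m → ℝ | ∀ k j, 0 ≤ lam k j} := by
    have he : {lam : Fin m → Fin m → ℝ | ∀ k j, 0 ≤ lam k j}
        = ⋂ k, ⋂ j, {lam : Fin m → Fin m → ℝ | 0 ≤ lam k j} := by
      ext lam; simp [Set.mem_iInter]
    rw [he]
    exact isClosed_iInter fun k => isClosed_iInter fun j =>
      isClosed_le continuous_const ((continuous_apply j).comp (continuous_apply k))
  have h2 : IsClosed {lam : Fin m → Fin m → ℝ | ∀ k j : Fin m, k < j → lam k j = 0} := by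
    have he : {lam : Fin m → Fin m → ℝ | ∀ k j : Fin m, k < j → lam k j = 0}
        = ⋂ k, ⋂ j, {lam : Fin m → Fin m → ℝ | k < j → lam k j = 0} := by
      ext lam; simp [Set.mem_iInter]
    rw [he]
    refine isClosed_iInter fun k => isClosed_iInter fun j => ?_
    by_cases h : k < j
    · have he2 : {lam : Fin m → Fin m → ℝ | k < j → lam k j = 0}
          = {lam : Fin m → Fin m → ℝ | lam k j = 0} := by
        ext lam; simp [h]
      rw [he2]
      exact isClosed_eq ((continuous_apply j).comp (continuous_apply k)) continuous_const
    · have he2 : {lam : Fin m → Fin m → ℝ | k < j → lam k j = 0} = Set.univ := by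
        ext lam; simp [h]
      rw [he2]; exact isClosed_univ
  have h3 : IsClosed {lam : Fin m → Fin m → ℝ | ∀ k, ∑ j ∈ Iic k, lam k j = 1} := by
    have he : {lam : Fin m → Fin m → ℝ | ∀ k, ∑ j ∈ Iic k, lam k j = 1}
        = ⋂ k, {lam : Fin m → Fin m → ℝ | ∑ j ∈ Iic k, lam k j = 1} := by
      ext lam; simp [Set.mem_iInter]
    rw [he]
    exact isClosed_iInter fun k => isClosed_eq
      (continuous_finset_sum _ fun j _ => (continuous_apply j).comp (continuous_apply k))
      continuous_const
  have he : {lam : Fin m → Fin m → ℝ | IsMultiplier lam}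
      = {lam : Fin m → Fin m → ℝ | ∀ k j, 0 ≤ lam k j}
        ∩ ({lam : Fin m → Fin m → ℝ | ∀ k j : Fin m, k < j → lam k j = 0}
          ∩ {lam : Fin m → Fin m → ℝ | ∀ k, ∑ j ∈ Iic k, lam k j = 1}) := rfl
  rw [he]
  exact h1.inter (h2.inter h3)

lemma isCompact_Kset : IsCompact {lam : Fin m → Fin m → ℝ | IsMultiplier lam} := by
  refine IsCompact.of_isClosed_subset
    (isCompact_univ_pi (fun k => isCompact_univ_pi fun j => isCompact_Icc
      (a := (0:ℝ)) (b := 1))) isClosed_Kset ?_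
  rintro lam ⟨h0, hup, hsum⟩
  rw [Set.mem_univ_pi]
  intro k
  rw [Set.mem_univ_pi]
  intro j
  constructor
  · exact h0 k j
  · by_cases hjk : j ≤ k
    · calc lam k j ≤ ∑ j' ∈ Iic k, lam k j' :=
          single_le_sum (fun j' _ => h0 k j') (mem_Iic.2 hjk)
        _ = 1 := hsum k
    · rw [hup k j (lt_of_not_ge hjk)]; norm_num

lemma diag_isMultiplier : IsMultiplier (fun k j : Fin m => if j = k then (1:ℝ) else 0) := by
  refine ⟨fun k j => by dsimp only; split <;> norm_num, fun k j h => if_neg (fun e => absurd h (by simp [e])), fun k => ?_⟩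
  rw [sum_ite_eq' (Iic k) k (fun _ => (1:ℝ))]
  simp

noncomputable def upd (lam : Fin m → Fin m → ℝ) (k i j : Fin m) (ε : ℝ) :
    Fin m → Fin m → ℝ :=
  fun k' j' => if k' = k then
    (if j' = i then lam k' j' - ε else if j' = j then lam k' j' + ε else lam k' j')
    else lam k' j'

lemma upd_key (lam : Fin m → Fin m → ℝ) {k i j : Fin m} (hij : i ≠ j) (ε : ℝ)
    (k' j' : Fin m) :
    upd lam k i j ε k' j' = lam k' j'
      + (if k' = k ∧ j' = j then ε else 0) - (if k' = k ∧ j' = i then ε else 0) := by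
  unfold upd
  by_cases h1 : k' = k
  · by_cases h2 : j' = i
    · by_cases h3 : j' = j
      · exact absurd (h2.symm.trans h3) hij
      · rw [if_pos h1, if_pos h2, if_neg (fun h => h3 h.2), if_pos ⟨h1, h2⟩]; ring
    · by_cases h3 : j' = j
      · rw [if_pos h1, if_neg h2, if_pos h3, if_pos ⟨h1, h3⟩, if_neg (fun h => h2 h.2)]; ring
      · rw [if_pos h1, if_neg h2, if_neg h3, if_neg (fun h => h3 h.2),
          if_neg (fun h => h2 h.2)]; ring
  · rw [if_neg h1, if_neg (fun h => h1 h.1), if_neg (fun h => h1 h.1)]; ring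

lemma upd_isMultiplier (lam : Fin m → Fin m → ℝ) (hlam : IsMultiplier lam)
    {k i j : Fin m} (hik : i ≤ k) (hjk : j ≤ k) (hij : i ≠ j) {ε : ℝ}
    (hε0 : 0 ≤ ε) (hεle : ε ≤ lam k i) : IsMultiplier (upd lam k i j ε) := by
  obtain ⟨h0, hup, hsum⟩ := hlam
  refine ⟨?_, ?_, ?_⟩
  · intro k' j'
    unfold upd
    split_ifs with h1 h2 h3
    · subst h1; subst h2; linarith
    · have := h0 k' j'; linarith
    · exact h0 k' j'
    · exact h0 k' j'
  · intro k' j' hlt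
    unfold upd
    split_ifs with h1 h2 h3
    · exfalso; subst h1; subst h2; exact absurd hlt (not_lt.2 hik)
    · exfalso; subst h1; subst h3; exact absurd hlt (not_lt.2 hjk)
    · exact hup k' j' hlt
    · exact hup k' j' hlt
  · intro k'
    by_cases hk' : k' = k
    · subst hk'
      rw [sum_congr rfl (fun j' _ => upd_key lam hij ε k' j')]
      rw [sum_sub_distrib, sum_add_distrib]
      have e1 : ∑ j' ∈ Iic k', (if k' = k' ∧ j' = j then ε else 0) = ε := by
        simp only [eq_self_iff_true, true_and]
        rw [sum_ite_eq' (Iic k') j (fun _ => ε), if_pos (mem_Iic.2 hjk)]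
      have e2 : ∑ j' ∈ Iic k', (if k' = k' ∧ j' = i then ε else 0) = ε := by
        simp only [eq_self_iff_true, true_and]
        rw [sum_ite_eq' (Iic k') i (fun _ => ε), if_pos (mem_Iic.2 hik)]
      rw [e1, e2, hsum]
      ring
    · have : ∀ j' ∈ Iic k', upd lam k i j ε k' j' = lam k' j' := by
        intro j' _; unfold upd; rw [if_neg hk']
      rw [sum_congr rfl this, hsum]

lemma upd_phi (lam : Fin m → Fin m → ℝ) {k i j : Fin m} (hik : i ≤ k) (hjk : j ≤ k)
    (hij : i ≠ j) (ε : ℝ) (l : Fin m) :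
    phi v q (upd lam k i j ε) l =
      phi v q lam l + (if l = i then ε * (q k * (v k - v i)) / q i else 0)
        - (if l = j then ε * (q k * (v k - v j)) / q j else 0) := by
  unfold phi
  rw [sum_congr rfl (fun k' _ => by rw [upd_key lam hij ε k' l])]
  by_cases hli : l = i
  · subst hli
    rw [if_pos rfl, if_neg hij]
    have hs : ∑ k' ∈ Ici l, q k' * (v k' - v l) *
        (lam k' l + (if k' = k ∧ l = j then ε else 0) - (if k' = k ∧ l = l then ε else 0))
        = (∑ k' ∈ Ici l, q k' * (v k' - v l) * lam k' l)
          - q k * (v k - v l) * ε := by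
      have hpt : ∀ k' ∈ Ici l, q k' * (v k' - v l) *
          (lam k' l + (if k' = k ∧ l = j then ε else 0) - (if k' = k ∧ l = l then ε else 0))
          = q k' * (v k' - v l) * lam k' l
            - (if k' = k then q k' * (v k' - v l) * ε else 0) := by
        intro k' _
        rw [if_neg (fun h => hij h.2)]
        by_cases h1 : k' = k
        · rw [if_pos ⟨h1, rfl⟩, if_pos h1]; ring
        · rw [if_neg (fun h => h1 h.1), if_neg h1]; ring
      rw [sum_congr rfl hpt, sum_sub_distrib,
        sum_ite_eq' (Ici l) k (fun k' => q k' * (v k' - v l) * ε),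
        if_pos (mem_Ici.2 hik)]
    rw [hs]; ring
  · by_cases hlj : l = j
    · subst hlj
      rw [if_neg hli, if_pos rfl]
      have hs : ∑ k' ∈ Ici l, q k' * (v k' - v l) *
          (lam k' l + (if k' = k ∧ l = l then ε else 0) - (if k' = k ∧ l = i then ε else 0))
          = (∑ k' ∈ Ici l, q k' * (v k' - v l) * lam k' l)
            + q k * (v k - v l) * ε := by
        have hpt : ∀ k' ∈ Ici l, q k' * (v k' - v l) *
            (lam k' l + (if k' = k ∧ l = l then ε else 0) - (if k' = k ∧ l = i then ε else 0))
            = q k' * (v k' - v l) * lam k' l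
              + (if k' = k then q k' * (v k' - v l) * ε else 0) := by
          intro k' _
          by_cases h1 : k' = k
          · rw [if_pos (show k' = k ∧ l = l from ⟨h1, rfl⟩),
              if_neg (show ¬(k' = k ∧ l = i) from fun h => hli h.2), if_pos h1]; ring
          · rw [if_neg (show ¬(k' = k ∧ l = l) from fun h => h1 h.1),
              if_neg (show ¬(k' = k ∧ l = i) from fun h => h1 h.1), if_neg h1]; ring
        rw [sum_congr rfl hpt, sum_add_distrib,
          sum_ite_eq' (Ici l) k (fun k' => q k' * (v k' - v l) * ε),
          if_pos (mem_Ici.2 hjk)]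
      rw [hs]; ring
    · rw [if_neg hli, if_neg hlj]
      have hpt : ∀ k' ∈ Ici l, q k' * (v k' - v l) *
          (lam k' l + (if k' = k ∧ l = j then ε else 0) - (if k' = k ∧ l = i then ε else 0))
          = q k' * (v k' - v l) * lam k' l := by
        intro k' _
        rw [if_neg (fun h => hlj h.2), if_neg (fun h => hli h.2)]
        ring
      rw [sum_congr rfl hpt]; ring

lemma upd_Ssum (hq : ∀ a, 0 < q a) (lam : Fin m → Fin m → ℝ) {k i j : Fin m}
    (hik : i ≤ k) (hjk : j ≤ k) (hij : i ≠ j) (ε : ℝ) (t : ℕ) :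
    Ssum v q (upd lam k i j ε) t =
      Ssum v q lam t + (if t ≤ i.val then ε * (q k * (v k - v i)) else 0)
        - (if t ≤ j.val then ε * (q k * (v k - v j)) else 0) := by
  unfold Ssum
  have hpt : ∀ l ∈ univ.filter (fun l : Fin m => t ≤ l.val),
      q l * phi v q (upd lam k i j ε) l
        = q l * phi v q lam l + (if l = i then ε * (q k * (v k - v i)) else 0)
          - (if l = j then ε * (q k * (v k - v j)) else 0) := by
    intro l _
    rw [upd_phi v q lam hik hjk hij ε l]
    by_cases h1 : l = i
    · subst h1
      rw [if_pos rfl, if_pos rfl, if_neg (fun h => hij h), if_neg (fun h => hij h)]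
      have hne : q l ≠ 0 := ne_of_gt (hq l)
      field_simp
      ring
    · by_cases h2 : l = j
      · subst h2
        rw [if_neg h1, if_neg h1, if_pos rfl, if_pos rfl]
        have hne : q l ≠ 0 := ne_of_gt (hq l)
        field_simp
        ring
      · rw [if_neg h1, if_neg h1, if_neg h2, if_neg h2]
        ring
  rw [sum_congr rfl hpt, sum_sub_distrib, sum_add_distrib]
  have e1 : ∑ l ∈ univ.filter (fun l : Fin m => t ≤ l.val),
      (if l = i then ε * (q k * (v k - v i)) else 0)
      = (if t ≤ i.val then ε * (q k * (v k - v i)) else 0) := by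
    rw [sum_ite_eq' _ i (fun _ => ε * (q k * (v k - v i)))]
    simp
  have e2 : ∑ l ∈ univ.filter (fun l : Fin m => t ≤ l.val),
      (if l = j then ε * (q k * (v k - v j)) else 0)
      = (if t ≤ j.val then ε * (q k * (v k - v j)) else 0) := by
    rw [sum_ite_eq' _ j (fun _ => ε * (q k * (v k - v j)))]
    simp
  rw [e1, e2]

end OptMult

open OptMult in
/-- There exists an optimal multiplier whose virtual values are all nonnegative. -/
theorem exists_optimal_multiplier_phi_nonneg (m : ℕ) (hm : 1 ≤ m) (v q : Fin m → ℝ)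
    (hv0 : ∀ i, 0 ≤ v i) (hvmono : ∀ i j : Fin m, i < j → v i < v j)
    (hq : ∀ i, 0 < q i) (hqsum : ∑ i, q i = 1) :
    ∃ lam : Fin m → Fin m → ℝ, IsMultiplier lam ∧
      (∀ lam' : Fin m → Fin m → ℝ, IsMultiplier lam' → g v q lam ≤ g v q lam') ∧
      (∀ i, 0 ≤ phi v q lam i) := by
  classical
  have hm0 : 0 < m := hm
  set F : (Fin m → Fin m → ℝ) → ℝ :=
    fun lam => (range (m+1)).sup' (range_ne m) (Ssum v q lam) with hF
  have hFg : ∀ lam, g v q lam = F lam := fun lam => g_eq v q hm0 lam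
  have hFcont : Continuous F :=
    continuous_sup' _ (range_ne m) (fun t lam => Ssum v q lam t)
      (fun t => continuous_Ssum v q t)
  have hKc : IsCompact {lam : Fin m → Fin m → ℝ | IsMultiplier lam} := isCompact_Kset
  have hKne : {lam : Fin m → Fin m → ℝ | IsMultiplier lam}.Nonempty :=
    ⟨_, diag_isMultiplier⟩
  obtain ⟨lam0, hlam0, hmin0⟩ := hKc.exists_isMinOn hKne hFcont.continuousOn
  set K1 : Set (Fin m → Fin m → ℝ) :=
    {lam | IsMultiplier lam} ∩ {lam | F lam ≤ F lam0} with hK1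
  have hK1c : IsCompact K1 := hKc.inter_right (isClosed_le hFcont continuous_const)
  have hK1ne : K1.Nonempty := ⟨lam0, hlam0, show F lam0 ≤ F lam0 from le_rfl⟩
  have hNcont : Continuous fun lam : Fin m → Fin m → ℝ => ∑ l, max 0 (-(phi v q lam l)) :=
    continuous_N v q
  obtain ⟨L, hLK1, hminN⟩ := hK1c.exists_isMinOn hK1ne hNcont.continuousOn
  obtain ⟨hLK, hLg⟩ := hLK1
  refine ⟨L, hLK, ?_, ?_⟩
  · intro lam' hlam'
    rw [hFg, hFg]
    exact le_trans hLg (isMinOn_iff.1 hmin0 lam' hlam')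
  · by_contra hneg
    push_neg at hneg
    obtain ⟨i, hi⟩ := hneg
    have him := i.isLt
    have hSle : ∀ t, t ≤ m → Ssum v q L t ≤ F lam0 := by
      intro t ht
      exact le_trans (le_sup' (Ssum v q L) (mem_range.2 (Nat.lt_succ_of_le ht))) hLg
    -- find a source k sending positive mass to column i
    have hsumpos : 0 < ∑ k' ∈ Ici i, q k' * (v k' - v i) * L k' i := by
      by_contra hS
      push_neg at hS
      have h2 : (1 / q i) * (∑ k' ∈ Ici i, q k' * (v k' - v i) * L k' i) ≤ 0 :=
        mul_nonpos_iff.2 (Or.inl ⟨(one_div_pos.2 (hq i)).le, hS⟩)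
      have h3 : 0 ≤ phi v q L i := by
        unfold phi
        linarith [hv0 i]
      linarith
    have hex : ∃ k' ∈ Ici i, 0 < q k' * (v k' - v i) * L k' i := by
      by_contra h
      push_neg at h
      have := sum_nonpos h
      linarith
    obtain ⟨k, hkmem, hkpos⟩ := hex
    have hikle : i ≤ k := mem_Ici.1 hkmem
    have hvik : 0 ≤ v k - v i := by
      rcases eq_or_lt_of_le hikle with h | h
      · rw [← h]; simp
      · linarith [hvmono i k h]
    have hLnn : 0 ≤ L k i := hLK.1 k i
    have hvpos : 0 < v k - v i := by
      rcases hvik.lt_or_eq with h | h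
      · exact h
      · exfalso; rw [← h, mul_zero, zero_mul] at hkpos; exact lt_irrefl 0 hkpos
    have hLpos : 0 < L k i := by
      rcases hLnn.lt_or_eq with h | h
      · exact h
      · exfalso; rw [← h, mul_zero] at hkpos; exact lt_irrefl 0 hkpos
    have hik : i < k := by
      rcases eq_or_lt_of_le hikle with h | h
      · exfalso; rw [h, sub_self] at hvpos; exact lt_irrefl 0 hvpos
      · exact h
    have hcpos : 0 < q k * (v k - v i) := mul_pos (hq k) hvpos
    set T := (range (m+1)).filter
      (fun t => t ≤ i.val ∧ Ssum v q L t = F lam0) with hT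
    by_cases hTne : T.Nonempty
    · -- Case B : some tail sum at or below i attains the max
      set t₀ := T.max' hTne with ht₀def
      have ht₀mem := T.max'_mem hTne
      have ht₀r : t₀ ∈ range (m+1) := (mem_filter.1 ht₀mem).1
      have ht₀i : t₀ ≤ i.val := (mem_filter.1 ht₀mem).2.1
      have ht₀S : Ssum v q L t₀ = F lam0 := (mem_filter.1 ht₀mem).2.2
      have hsplit : Ssum v q L t₀
          = (∑ l ∈ univ.filter (fun l : Fin m => t₀ ≤ l.val ∧ l.val ≤ i.val),
              q l * phi v q L l) + Ssum v q L (i.val+1) := by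
        have h1 : (univ.filter (fun l : Fin m => t₀ ≤ l.val)).filter
            (fun l => l.val ≤ i.val)
            = univ.filter (fun l : Fin m => t₀ ≤ l.val ∧ l.val ≤ i.val) := by
          rw [filter_filter]
        have h2 : (univ.filter (fun l : Fin m => t₀ ≤ l.val)).filter
            (fun l => ¬ l.val ≤ i.val)
            = univ.filter (fun l : Fin m => i.val + 1 ≤ l.val) := by
          rw [filter_filter]
          ext l
          simp only [mem_filter, mem_univ, true_and]
          omega
        unfold Ssum
        rw [← sum_filter_add_sum_filter_not
          (univ.filter (fun l : Fin m => t₀ ≤ l.val)) (fun l => l.val ≤ i.val)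
          (fun l => q l * phi v q L l), h1, h2]
      have hins : univ.filter (fun l : Fin m => t₀ ≤ l.val ∧ l.val ≤ i.val)
          = insert i (univ.filter (fun l : Fin m => t₀ ≤ l.val ∧ l.val < i.val)) := by
        ext l
        simp only [mem_filter, mem_univ, true_and, mem_insert]
        constructor
        · rintro ⟨h1, h2⟩
          rcases eq_or_lt_of_le h2 with h3 | h3
          · exact Or.inl (Fin.ext h3)
          · exact Or.inr ⟨h1, h3⟩
        · rintro (h1 | ⟨h1, h2⟩)
          · subst h1; exact ⟨ht₀i, le_refl _⟩
          · exact ⟨h1, le_of_lt h2⟩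
      have hnotmem : i ∉ univ.filter (fun l : Fin m => t₀ ≤ l.val ∧ l.val < i.val) := by
        simp
      rw [hins, sum_insert hnotmem, ht₀S] at hsplit
      have hS1 : Ssum v q L (i.val + 1) ≤ F lam0 := hSle (i.val + 1) (by omega)
      have hψi : q i * phi v q L i < 0 := mul_neg_of_pos_of_neg (hq i) hi
      have hjex : ∃ l ∈ univ.filter (fun l : Fin m => t₀ ≤ l.val ∧ l.val < i.val),
          0 < q l * phi v q L l := by
        by_contra h
        push_neg at h
        have := sum_nonpos h
        linarith
      obtain ⟨j, hjmem, hjpos⟩ := hjex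
      rw [mem_filter] at hjmem
      obtain ⟨-, ht₀j, hji⟩ := hjmem
      have hjiF : j < i := hji
      have hjk : j ≤ k := le_of_lt (lt_trans hjiF hik)
      have hijne : i ≠ j := ne_of_gt hjiF
      have hφj : 0 < phi v q L j := by
        by_contra h
        push_neg at h
        have : q j * phi v q L j ≤ 0 := mul_nonpos_iff.2 (Or.inl ⟨(hq j).le, h⟩)
        linarith
      have hvkj : 0 < v k - v j := by linarith [hvmono j k (lt_trans hjiF hik)]
      have hc2pos : 0 < q k * (v k - v j) := mul_pos (hq k) hvkj
      set Bad := (range (m+1)).filter (fun t => j.val < t ∧ t ≤ i.val) with hBad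
      have hBadne : Bad.Nonempty := by
        refine ⟨i.val, ?_⟩
        rw [hBad, mem_filter, mem_range]
        exact ⟨by omega, hji, le_refl _⟩
      have hBadlt : ∀ t ∈ Bad, Ssum v q L t < F lam0 := by
        intro t htB
        rw [hBad, mem_filter, mem_range] at htB
        obtain ⟨ht1, ht2, ht3⟩ := htB
        rcases (hSle t (by omega)).lt_or_eq with h | h
        · exact h
        · exfalso
          have htT : t ∈ T := by
            rw [hT, mem_filter, mem_range]
            exact ⟨ht1, ht3, h⟩
          have hle : t ≤ t₀ := T.le_max' t htT
          omega
      set Sb := Bad.sup' hBadne (Ssum v q L) with hSbdef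
      have hSblt : Sb < F lam0 := (sup'_lt_iff hBadne).2 hBadlt
      set ε := min (min (L k i) ((-(phi v q L i)) * q i / (q k * (v k - v i))))
        (min ((phi v q L j) * q j / (q k * (v k - v j)))
          ((F lam0 - Sb) / (q k * (v k - v i)))) with hε
      have hεpos : 0 < ε := by
        apply lt_min
        · exact lt_min hLpos (div_pos (mul_pos (by linarith) (hq i)) hcpos)
        · exact lt_min (div_pos (mul_pos hφj (hq j)) hc2pos)
            (div_pos (by linarith) hcpos)
      have hεL : ε ≤ L k i := le_trans (min_le_left _ _) (min_le_left _ _)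
      have hεphii : ε * (q k * (v k - v i)) / q i ≤ -(phi v q L i) := by
        have h1 : ε ≤ (-(phi v q L i)) * q i / (q k * (v k - v i)) :=
          le_trans (min_le_left _ _) (min_le_right _ _)
        rw [div_le_iff₀ (hq i)]
        calc ε * (q k * (v k - v i))
            ≤ ((-(phi v q L i)) * q i / (q k * (v k - v i))) * (q k * (v k - v i)) :=
              mul_le_mul_of_nonneg_right h1 hcpos.le
          _ = (-(phi v q L i)) * q i := div_mul_cancel₀ _ hcpos.ne'
      have hεphij : ε * (q k * (v k - v j)) / q j ≤ phi v q L j := by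
        have h1 : ε ≤ (phi v q L j) * q j / (q k * (v k - v j)) :=
          le_trans (min_le_right _ _) (min_le_left _ _)
        rw [div_le_iff₀ (hq j)]
        calc ε * (q k * (v k - v j))
            ≤ ((phi v q L j) * q j / (q k * (v k - v j))) * (q k * (v k - v j)) :=
              mul_le_mul_of_nonneg_right h1 hc2pos.le
          _ = (phi v q L j) * q j := div_mul_cancel₀ _ hc2pos.ne'
      have hεS : ε * (q k * (v k - v i)) ≤ F lam0 - Sb := by
        have h1 : ε ≤ (F lam0 - Sb) / (q k * (v k - v i)) :=
          le_trans (min_le_right _ _) (min_le_right _ _)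
        calc ε * (q k * (v k - v i))
            ≤ ((F lam0 - Sb) / (q k * (v k - v i))) * (q k * (v k - v i)) :=
              mul_le_mul_of_nonneg_right h1 hcpos.le
          _ = F lam0 - Sb := div_mul_cancel₀ _ hcpos.ne'
      set L' := upd L k i j ε with hL'
      have hL'mult : IsMultiplier L' :=
        upd_isMultiplier L hLK hikle hjk hijne hεpos.le hεL
      have hS' : ∀ t, t ≤ m → Ssum v q L' t ≤ F lam0 := by
        intro t ht
        rw [hL', upd_Ssum v q hq L hikle hjk hijne ε t]
        by_cases h1 : t ≤ j.val
        · have h2 : t ≤ i.val := by omega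
          rw [if_pos h2, if_pos h1]
          have h3 : ε * (q k * (v k - v i)) ≤ ε * (q k * (v k - v j)) := by
            have hvv : v j ≤ v i := (hvmono j i hjiF).le
            exact mul_le_mul_of_nonneg_left
              (mul_le_mul_of_nonneg_left (by linarith : v k - v i ≤ v k - v j) (hq k).le)
              hεpos.le
          linarith [hSle t ht]
        · by_cases h2 : t ≤ i.val
          · rw [if_pos h2, if_neg h1]
            have htB : t ∈ Bad := by
              rw [hBad, mem_filter, mem_range]
              exact ⟨by omega, by omega, h2⟩
            have h3 : Ssum v q L t ≤ Sb := le_sup' _ htB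
            linarith
          · rw [if_neg h2, if_neg h1]
            linarith [hSle t ht]
      have hL'K1 : L' ∈ K1 := by
        refine ⟨hL'mult, ?_⟩
        show F L' ≤ F lam0
        apply sup'_le
        intro t htr
        rw [mem_range] at htr
        exact hS' t (by omega)
      have hφ'i : phi v q L' i = phi v q L i + ε * (q k * (v k - v i)) / q i := by
        rw [hL', upd_phi v q L hikle hjk hijne ε i, if_pos rfl, if_neg hijne]
        ring
      have hφ'j : phi v q L' j = phi v q L j - ε * (q k * (v k - v j)) / q j := by
        rw [hL', upd_phi v q L hikle hjk hijne ε j, if_neg (ne_of_lt hjiF), if_pos rfl]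
        ring
      have hφ'o : ∀ l, l ≠ i → l ≠ j → phi v q L' l = phi v q L l := by
        intro l h1 h2
        rw [hL', upd_phi v q L hikle hjk hijne ε l, if_neg h1, if_neg h2]
        ring
      have hφ'ile : phi v q L' i ≤ 0 := by rw [hφ'i]; linarith
      have hφ'igt : phi v q L i < phi v q L' i := by
        rw [hφ'i]
        have h4 : 0 < ε * (q k * (v k - v i)) / q i :=
          div_pos (mul_pos hεpos hcpos) (hq i)
        linarith
      have hφ'jge : 0 ≤ phi v q L' j := by rw [hφ'j]; linarith
      have hNlt : (∑ l, max 0 (-(phi v q L' l))) < ∑ l, max 0 (-(phi v q L l)) := by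
        apply sum_lt_sum
        · intro l _
          by_cases h1 : l = i
          · subst h1
            exact max_le_max (le_refl 0) (by linarith)
          · by_cases h2 : l = j
            · subst h2
              rw [max_eq_left (by linarith : -(phi v q L' l) ≤ 0)]
              exact le_max_left _ _
            · rw [hφ'o l h1 h2]
        · refine ⟨i, mem_univ i, ?_⟩
          rw [max_eq_right (by linarith : (0:ℝ) ≤ -(phi v q L' i)),
            max_eq_right (by linarith : (0:ℝ) ≤ -(phi v q L i))]
          linarith
      exact not_le.2 hNlt (isMinOn_iff.1 hminN L' hL'K1)
    · -- Case A : all tail sums at or below i are strictly below the max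
      have hTlt : ∀ t, t ≤ m → t ≤ i.val → Ssum v q L t < F lam0 := by
        intro t ht hti
        rcases (hSle t ht).lt_or_eq with h | h
        · exact h
        · exact absurd (⟨t, by rw [hT, mem_filter, mem_range]; exact ⟨by omega, hti, h⟩⟩ :
            T.Nonempty) hTne
      have hikne : i ≠ k := ne_of_lt hik
      set Bad := (range (m+1)).filter (fun t => t ≤ i.val) with hBad
      have hBadne : Bad.Nonempty := by
        refine ⟨0, ?_⟩
        rw [hBad, mem_filter, mem_range]
        exact ⟨by omega, by omega⟩
      have hBadlt : ∀ t ∈ Bad, Ssum v q L t < F lam0 := by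
        intro t htB
        rw [hBad, mem_filter, mem_range] at htB
        exact hTlt t (by omega) htB.2
      set Sb := Bad.sup' hBadne (Ssum v q L) with hSbdef
      have hSblt : Sb < F lam0 := (sup'_lt_iff hBadne).2 hBadlt
      set ε := min (L k i) (min ((-(phi v q L i)) * q i / (q k * (v k - v i)))
        ((F lam0 - Sb) / (q k * (v k - v i)))) with hε
      have hεpos : 0 < ε :=
        lt_min hLpos (lt_min (div_pos (mul_pos (by linarith) (hq i)) hcpos)
          (div_pos (by linarith) hcpos))
      have hεL : ε ≤ L k i := min_le_left _ _
      have hεphii : ε * (q k * (v k - v i)) / q i ≤ -(phi v q L i) := by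
        have h1 : ε ≤ (-(phi v q L i)) * q i / (q k * (v k - v i)) :=
          le_trans (min_le_right _ _) (min_le_left _ _)
        rw [div_le_iff₀ (hq i)]
        calc ε * (q k * (v k - v i))
            ≤ ((-(phi v q L i)) * q i / (q k * (v k - v i))) * (q k * (v k - v i)) :=
              mul_le_mul_of_nonneg_right h1 hcpos.le
          _ = (-(phi v q L i)) * q i := div_mul_cancel₀ _ hcpos.ne'
      have hεS : ε * (q k * (v k - v i)) ≤ F lam0 - Sb := by
        have h1 : ε ≤ (F lam0 - Sb) / (q k * (v k - v i)) :=
          le_trans (min_le_right _ _) (min_le_right _ _)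
        calc ε * (q k * (v k - v i))
            ≤ ((F lam0 - Sb) / (q k * (v k - v i))) * (q k * (v k - v i)) :=
              mul_le_mul_of_nonneg_right h1 hcpos.le
          _ = F lam0 - Sb := div_mul_cancel₀ _ hcpos.ne'
      set L' := upd L k i k ε with hL'
      have hL'mult : IsMultiplier L' :=
        upd_isMultiplier L hLK hikle (le_refl k) hikne hεpos.le hεL
      have hz : ε * (q k * (v k - v k)) = 0 := by rw [sub_self, mul_zero, mul_zero]
      have hS' : ∀ t, t ≤ m → Ssum v q L' t ≤ F lam0 := by
        intro t ht
        rw [hL', upd_Ssum v q hq L hikle (le_refl k) hikne ε t, hz, ite_self]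
        by_cases h2 : t ≤ i.val
        · rw [if_pos h2]
          have htB : t ∈ Bad := by
            rw [hBad, mem_filter, mem_range]
            exact ⟨by omega, h2⟩
          have h3 : Ssum v q L t ≤ Sb := le_sup' _ htB
          linarith
        · rw [if_neg h2]
          linarith [hSle t ht]
      have hL'K1 : L' ∈ K1 := by
        refine ⟨hL'mult, ?_⟩
        show F L' ≤ F lam0
        apply sup'_le
        intro t htr
        rw [mem_range] at htr
        exact hS' t (by omega)
      have hφ'i : phi v q L' i = phi v q L i + ε * (q k * (v k - v i)) / q i := by
        rw [hL', upd_phi v q L hikle (le_refl k) hikne ε i, if_pos rfl, if_neg hikne]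
        ring
      have hφ'o : ∀ l, l ≠ i → phi v q L' l = phi v q L l := by
        intro l h1
        by_cases h2 : l = k
        · rw [hL', upd_phi v q L hikle (le_refl k) hikne ε l, if_neg h1, if_pos h2]
          simp
        · rw [hL', upd_phi v q L hikle (le_refl k) hikne ε l, if_neg h1, if_neg h2]
          ring
      have hφ'ile : phi v q L' i ≤ 0 := by rw [hφ'i]; linarith
      have hφ'igt : phi v q L i < phi v q L' i := by
        rw [hφ'i]
        have h4 : 0 < ε * (q k * (v k - v i)) / q i :=
          div_pos (mul_pos hεpos hcpos) (hq i)
        linarith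
      have hNlt : (∑ l, max 0 (-(phi v q L' l))) < ∑ l, max 0 (-(phi v q L l)) := by
        apply sum_lt_sum
        · intro l _
          by_cases h1 : l = i
          · subst h1
            exact max_le_max (le_refl 0) (by linarith)
          · rw [hφ'o l h1]
        · refine ⟨i, mem_univ i, ?_⟩
          rw [max_eq_right (by linarith : (0:ℝ) ≤ -(phi v q L' i)),
            max_eq_right (by linarith : (0:ℝ) ≤ -(phi v q L i))]
          linarith
      exact not_le.2 hNlt (isMinOn_iff.1 hminN L' hL'K1)
end

section
/- There exists an optimal multiplier λ (minimizing g over all multipliers) such that there are no indices i < j < k < l with λ l i > 0 and λ k j > 0. -/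
/-!
`g λ` is the largest tail sum `∑_{i ≥ t} q i φ(i, λ)` (the empty tail included), because monotone
allocations with values in `[0, 1]` are convex combinations of indicators of upper sets. So `g` is
continuous, and on the compact set of multipliers we may pick a minimiser of `g` that maximises
the potential `∑ q a · a · b · λ a b` among all minimisers. If `λ l i > 0` and `λ k j > 0` with
`i < j < k < l`, moving mass from `(l, i), (k, j)` to `(l, j), (k, i)` keeps a multiplier, lowers
every tail sum (as `v k ≤ v l`) and strictly raises the potential, a contradiction.
-/

open Finset

theorem IsCompact.exists_isMinOn_isMaxOn {α β γ : Type*} [TopologicalSpace α]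
    [TopologicalSpace β] [LinearOrder β] [OrderClosedTopology β]
    [TopologicalSpace γ] [LinearOrder γ] [ClosedIciTopology γ]
    {s : Set α} (hs : IsCompact s) (hne : s.Nonempty) {f : α → β} {h : α → γ}
    (hf : Continuous f) (hh : Continuous h) :
    ∃ x ∈ s, IsMinOn f s x ∧ IsMaxOn h {y ∈ s | f y ≤ f x} x := by
  obtain ⟨x₀, hx₀, hmin⟩ := hs.exists_isMinOn hne hf.continuousOn
  obtain ⟨x, ⟨hx, hfx⟩, hmax⟩ := (hs.inter_right (isClosed_le hf continuous_const)).exists_isMaxOn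
    ⟨x₀, hx₀, le_rfl⟩ hh.continuousOn
  exact ⟨x, hx, fun y hy => (hfx.trans (hmin hy) : f x ≤ f y),
    fun y ⟨hy, hfy⟩ => hmax ⟨hy, hfy.trans hfx⟩⟩

lemma sum_mul_single_sub_single {ι R : Type*} [DecidableEq ι] [Ring R] (s : Finset ι) (f : ι → R)
    (i j : ι) :
    ∑ b ∈ s, f b * (Pi.single j 1 - Pi.single i 1 : ι → R) b =
      (if j ∈ s then f j else 0) - (if i ∈ s then f i else 0) := by
  simp [mul_sub, sum_sub_distrib, Pi.single_apply]

lemma eq_or_eq_of_single_sub_single_ne_zero {ι R : Type*} [DecidableEq ι] [Ring R] {i j b : ι}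
    (h : (Pi.single j 1 - Pi.single i 1 : ι → R) b ≠ 0) : b = j ∨ b = i := by
  by_contra! hb
  simp [hb.1, hb.2] at h

section Allocation

variable {m : ℕ}

/-- Thresholds are natural numbers so that `t = m` gives the empty tail (the zero allocation). -/
def tailSum (c : Fin m → ℝ) (t : ℕ) : ℝ :=
  ∑ i ∈ univ.filter (fun i : Fin m => t ≤ i.val), c i

lemma tailSum_zero (c : Fin m → ℝ) : tailSum c 0 = ∑ i, c i := by
  simp [tailSum]

lemma tailSum_succ (c : Fin (m + 1) → ℝ) (t : ℕ) :
    tailSum c (t + 1) = tailSum (fun i : Fin m => c i.succ) t := by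
  simp [tailSum, sum_filter, Fin.sum_univ_succ]

lemma tailSum_self (c : Fin m → ℝ) : tailSum c m = 0 := by
  refine sum_eq_zero fun i hi => ?_
  simp only [mem_filter, mem_univ, true_and] at hi
  exact absurd i.isLt (not_lt.2 hi)

/-- Abel summation, in the scale-invariant form that survives the induction. -/
lemma sum_mul_le_of_tailSum_le (c x : Fin m → ℝ) (hx : Monotone x) {b B : ℝ} (hb : 0 ≤ b)
    (hx0 : ∀ i, 0 ≤ x i) (hxb : ∀ i, x i ≤ b) (hB : ∀ t ≤ m, tailSum c t ≤ B) :
    ∑ i, c i * x i ≤ b * B := by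
  induction m generalizing b with
  | zero => simpa [tailSum_self] using mul_nonneg hb (tailSum_self c ▸ hB 0 le_rfl)
  | succ m ih =>
    set a := x 0
    have ha : 0 ≤ a := hx0 0
    have htail := ih (fun i => c i.succ) (fun i => x i.succ - a)
      (fun i j hij => sub_le_sub_right (hx (Fin.succ_le_succ_iff.2 hij)) a)
      (sub_nonneg.2 (hxb 0)) (fun i => sub_nonneg.2 (hx (Fin.zero_le _)))
      (fun i => sub_le_sub_right (hxb _) a)
      (fun t ht => tailSum_succ c t ▸ hB (t + 1) (by omega))
    have hfirst : a * ∑ i, c i ≤ a * B :=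
      mul_le_mul_of_nonneg_left (tailSum_zero c ▸ hB 0 (Nat.zero_le _)) ha
    calc ∑ i, c i * x i
        = a * ∑ i, c i + ∑ i : Fin m, c i.succ * (x i.succ - a) := by
          simp only [a, Fin.sum_univ_succ, mul_sub, sum_sub_distrib, ← sum_mul]
          ring
      _ ≤ a * B + (b - a) * B := add_le_add hfirst htail
      _ = b * B := by ring

lemma isAlloc_indicator (t : ℕ) : IsAlloc fun i : Fin m => if t ≤ i.val then (1 : ℝ) else 0 := by
  refine ⟨fun i j hij => ?_, fun i => ?_⟩
  · by_cases hi : t ≤ i.val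
    · simp [hi, hi.trans (Fin.le_iff_val_le_val.1 hij)]
    · simp only [hi, if_false]; split_ifs <;> norm_num
  · dsimp only
    split_ifs <;> norm_num

lemma sum_mul_indicator (c : Fin m → ℝ) (t : ℕ) :
    ∑ i, c i * (if t ≤ i.val then 1 else 0) = tailSum c t := by
  simp [tailSum, sum_filter]

lemma sSup_sum_mul_isAlloc (c : Fin m → ℝ) :
    sSup {s : ℝ | ∃ x : Fin m → ℝ, IsAlloc x ∧ s = ∑ i, c i * x i} =
      (range (m + 1)).sup' nonempty_range_add_one (tailSum c) := by
  refine IsGreatest.csSup_eq ⟨?_, ?_⟩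
  · obtain ⟨t, -, ht⟩ := exists_mem_eq_sup' nonempty_range_add_one (tailSum c)
    exact ⟨_, isAlloc_indicator t, ht.trans (sum_mul_indicator c t).symm⟩
  · rintro s ⟨x, ⟨hx, hx01⟩, rfl⟩
    simpa using sum_mul_le_of_tailSum_le (B := (range (m + 1)).sup' nonempty_range_add_one _) c x
      hx zero_le_one (fun i => (hx01 i).1) (fun i => (hx01 i).2)
      fun t ht => le_sup' (tailSum c) (mem_range.2 (Nat.lt_succ_of_le ht))

end Allocation

section Multiplier

variable {m : ℕ}

lemma isMultiplier_one : IsMultiplier fun k j : Fin m => if k = j then (1 : ℝ) else 0 := by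
  refine ⟨fun k j => ite_nonneg zero_le_one le_rfl, fun k j h => if_neg h.ne, fun k => ?_⟩
  simp

lemma isCompact_setOf_isMultiplier : IsCompact {lam : Fin m → Fin m → ℝ | IsMultiplier lam} := by
  have hclosed : IsClosed {lam : Fin m → Fin m → ℝ | IsMultiplier lam} := by
    simp only [IsMultiplier, Set.ofPred_and, Set.ofPred_forall]
    refine .inter (isClosed_iInter fun k => isClosed_iInter fun j => ?_) (.inter ?_ ?_)
    · exact isClosed_le continuous_const (by fun_prop)
    · exact isClosed_iInter fun k => isClosed_iInter fun j =>
        isClosed_iInter fun _ => isClosed_eq (by fun_prop) continuous_const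
    · exact isClosed_iInter fun k => isClosed_eq (by fun_prop) continuous_const
  refine (isCompact_Icc (a := 0) (b := 1)).of_isClosed_subset hclosed
    fun lam ⟨h0, htri, hsum⟩ => ⟨h0, fun k j => ?_⟩
  rcases le_or_gt j k with hjk | hkj
  · exact (single_le_sum (fun j _ => h0 k j) (mem_Iic.2 hjk)).trans_eq (hsum k)
  · exact (htri k j hkj).trans_le zero_le_one

variable (v q : Fin m → ℝ)

lemma g_eq_sup' (lam : Fin m → Fin m → ℝ) :
    g v q lam = (range (m + 1)).sup' nonempty_range_add_one
      (tailSum fun i => q i * phi v q lam i) :=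
  sSup_sum_mul_isAlloc _

lemma continuous_g : Continuous (g v q) := by
  rw [funext (g_eq_sup' v q)]
  refine Continuous.finset_sup'_apply _ fun t _ => ?_
  unfold tailSum phi
  fun_prop

lemma g_le_g_of_tailSum_le {lam lam' : Fin m → Fin m → ℝ}
    (h : ∀ t, tailSum (fun i => q i * phi v q lam' i) t ≤
      tailSum (fun i => q i * phi v q lam i) t) :
    g v q lam' ≤ g v q lam := by
  simpa only [g_eq_sup'] using sup'_mono_fun fun t _ => h t

end Multiplier

section Uncross

variable {m : ℕ} (v q : Fin m → ℝ)

lemma mul_phi_add_div (hq : ∀ i, q i ≠ 0) (lam ρ : Fin m → Fin m → ℝ) (b : Fin m) :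
    q b * phi v q (fun a c => lam a c + ρ a c / q a) b =
      q b * phi v q lam b - ∑ a ∈ Ici b, (v a - v b) * ρ a b := by
  have hsum : ∑ a ∈ Ici b, q a * (v a - v b) * (lam a b + ρ a b / q a) =
      ∑ a ∈ Ici b, q a * (v a - v b) * lam a b + ∑ a ∈ Ici b, (v a - v b) * ρ a b := by
    rw [← sum_add_distrib]
    refine sum_congr rfl fun a _ => ?_
    field_simp [hq a]
  simp only [phi, hsum]
  field_simp [hq b]
  ring

/-- Moves mass `ε` (in units of `q`) from the entries `(l, i), (k, j)` to `(l, j), (k, i)`. -/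
noncomputable def uncross (ε : ℝ) (i j k l : Fin m) (lam : Fin m → Fin m → ℝ) :
    Fin m → Fin m → ℝ :=
  fun a b => lam a b + ε * ((Pi.single l 1 - Pi.single k 1 : Fin m → ℝ) a *
    (Pi.single j 1 - Pi.single i 1 : Fin m → ℝ) b) / q a

/-- The weight `a * b` is supermodular, so uncrossing increases this potential. -/
def potential (lam : Fin m → Fin m → ℝ) : ℝ :=
  ∑ a : Fin m, ∑ b : Fin m, q a * (a : ℕ) * (b : ℕ) * lam a b

lemma continuous_potential : Continuous (potential q) := by
  unfold potential
  fun_prop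

variable {q} {ε : ℝ} {i j k l : Fin m} {lam : Fin m → Fin m → ℝ}

lemma potential_uncross (hq : ∀ a, q a ≠ 0) :
    potential q (uncross q ε i j k l lam) =
      potential q lam + ε * ((l : ℕ) - (k : ℕ) : ℝ) * ((j : ℕ) - (i : ℕ) : ℝ) := by
  have h : ∀ a b : Fin m, q a * (a : ℕ) * (b : ℕ) * uncross q ε i j k l lam a b =
      q a * (a : ℕ) * (b : ℕ) * lam a b +
        ε * (((a : ℕ) : ℝ) * (Pi.single l 1 - Pi.single k 1 : Fin m → ℝ) a) *
          (((b : ℕ) : ℝ) * (Pi.single j 1 - Pi.single i 1 : Fin m → ℝ) b) := by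
    intro a b
    simp only [uncross]
    field_simp [hq a]
  simp only [potential, h, sum_add_distrib, ← mul_sum, ← sum_mul, sum_mul_single_sub_single,
    mem_univ, if_true]

lemma IsMultiplier.uncross (hlam : IsMultiplier lam) (hq : ∀ a, 0 < q a)
    (hij : i < j) (hjk : j < k) (hkl : k < l)
    (hε : 0 ≤ ε) (hεl : ε ≤ q l * lam l i) (hεk : ε ≤ q k * lam k j) :
    IsMultiplier (uncross q ε i j k l lam) := by
  obtain ⟨h0, htri, hsum⟩ := hlam
  set u : Fin m → ℝ := Pi.single l 1 - Pi.single k 1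
  set w : Fin m → ℝ := Pi.single j 1 - Pi.single i 1
  have hu : ∀ a, u a ≠ 0 → k ≤ a := fun a ha => by
    rcases eq_or_eq_of_single_sub_single_ne_zero ha with rfl | rfl
    exacts [hkl.le, le_rfl]
  have hw : ∀ b, w b ≠ 0 → b ≤ k := fun b hb => by
    rcases eq_or_eq_of_single_sub_single_ne_zero hb with rfl | rfl
    exacts [hjk.le, (hij.trans hjk).le]
  refine ⟨fun a b => ?_, fun a b hab => ?_, fun a => ?_⟩
  · have hqlam : 0 ≤ q a * lam a b := mul_nonneg (hq a).le (h0 a b)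
    have hmass : 0 ≤ q a * lam a b + ε * (u a * w b) := by
      rcases eq_or_ne a l with rfl | hal
      · rcases eq_or_ne b i with rfl | hbi
        · simp [u, w, hkl.ne', hij.ne']
          linarith
        · simp [u, w, Pi.single_apply, hkl.ne', hbi]
          split_ifs <;> linarith
      · rcases eq_or_ne a k with rfl | hak
        · rcases eq_or_ne b j with rfl | hbj
          · simp [u, w, hal, hij.ne']
            linarith
          · simp [u, w, Pi.single_apply, hal, hbj]
            split_ifs <;> linarith
        · simpa [u, w, Pi.single_apply, hal, hak] using hqlam
    have : lam a b + ε * (u a * w b) / q a = (q a * lam a b + ε * (u a * w b)) / q a := by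
      field_simp [(hq a).ne']
    show 0 ≤ lam a b + ε * (u a * w b) / q a
    exact this ▸ div_nonneg hmass (hq a).le
  · have huw : u a * w b = 0 := by
      by_contra h
      obtain ⟨hua, hwb⟩ := mul_ne_zero_iff.1 h
      exact (hw b hwb).not_gt (hab.trans_le' (hu a hua))
    show lam a b + ε * (u a * w b) / q a = 0
    rw [htri a b hab, huw, mul_zero, zero_div, zero_add]
  · show ∑ b ∈ Iic a, (lam a b + ε * (u a * w b) / q a) = 1
    by_cases hua : u a = 0
    · simp [hua, hsum a]
    have hka := hu a hua
    have hrow := sum_mul_single_sub_single (Iic a) (fun _ => ε * u a / q a) i j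
    simp only [mem_Iic, (hij.trans hjk).le.trans hka, hjk.le.trans hka, if_true, sub_self] at hrow
    rw [sum_add_distrib, hsum a, add_eq_left, ← hrow]
    exact sum_congr rfl fun b _ => by ring

lemma mul_phi_uncross (hq : ∀ a, q a ≠ 0) (hik : i ≤ k) (hjk : j ≤ k) (hkl : k ≤ l) (b : Fin m) :
    q b * phi v q (uncross q ε i j k l lam) b =
      q b * phi v q lam b - ε * (v l - v k) * (Pi.single j 1 - Pi.single i 1 : Fin m → ℝ) b := by
  unfold uncross
  rw [mul_phi_add_div v q hq]
  congr 1
  by_cases hb : (Pi.single j 1 - Pi.single i 1 : Fin m → ℝ) b = 0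
  · simp [hb]
  have hbk : b ≤ k := by
    rcases eq_or_eq_of_single_sub_single_ne_zero hb with rfl | rfl <;> assumption
  have hcol := sum_mul_single_sub_single (Ici b) (fun a => v a - v b) k l
  simp only [mem_Ici, hbk, hbk.trans hkl, if_true] at hcol
  calc ∑ a ∈ Ici b, (v a - v b) * (ε * ((Pi.single l 1 - Pi.single k 1 : Fin m → ℝ) a *
          (Pi.single j 1 - Pi.single i 1 : Fin m → ℝ) b))
      = ε * (∑ a ∈ Ici b, (v a - v b) * (Pi.single l 1 - Pi.single k 1 : Fin m → ℝ) a) *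
          (Pi.single j 1 - Pi.single i 1 : Fin m → ℝ) b := by
        rw [mul_sum, sum_mul]
        exact sum_congr rfl fun a _ => by ring
    _ = ε * (v l - v k) * (Pi.single j 1 - Pi.single i 1 : Fin m → ℝ) b := by
        rw [hcol]; ring

lemma tailSum_uncross_le (hq : ∀ a, q a ≠ 0) (hv : v k ≤ v l) (hε : 0 ≤ ε)
    (hij : i ≤ j) (hjk : j ≤ k) (hkl : k ≤ l) (t : ℕ) :
    tailSum (fun b => q b * phi v q (uncross q ε i j k l lam) b) t ≤
      tailSum (fun b => q b * phi v q lam b) t := by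
  have hshift :=
    sum_mul_single_sub_single (univ.filter fun b : Fin m => t ≤ b.val) (fun _ => (1 : ℝ)) i j
  simp only [one_mul] at hshift
  have hmass : 0 ≤ ∑ b ∈ univ.filter (fun b : Fin m => t ≤ b.val),
      (Pi.single j 1 - Pi.single i 1 : Fin m → ℝ) b := by
    rw [hshift]
    by_cases hi : t ≤ i.val
    · simp [hi, hi.trans (Fin.le_def.1 hij)]
    · simp only [mem_filter, mem_univ, true_and, hi, if_false, sub_zero]
      split_ifs <;> norm_num
  simp only [tailSum, mul_phi_uncross v hq (hij.trans hjk) hjk hkl, sum_sub_distrib, ← mul_sum]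
  exact sub_le_self _ (mul_nonneg (mul_nonneg hε (sub_nonneg.2 hv)) hmass)

lemma g_uncross_le (hq : ∀ a, q a ≠ 0) (hv : v k ≤ v l) (hε : 0 ≤ ε)
    (hij : i ≤ j) (hjk : j ≤ k) (hkl : k ≤ l) :
    g v q (uncross q ε i j k l lam) ≤ g v q lam :=
  g_le_g_of_tailSum_le v q (tailSum_uncross_le v hq hv hε hij hjk hkl)

end Uncross

theorem exists_optimal_multiplier_no_crossing_general (m : ℕ) (v q : Fin m → ℝ)
    (hvmono : ∀ i j : Fin m, i < j → v i < v j)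
    (hq : ∀ i, 0 < q i) :
    ∃ lam : Fin m → Fin m → ℝ, IsMultiplier lam ∧
      (∀ lam' : Fin m → Fin m → ℝ, IsMultiplier lam' → g v q lam ≤ g v q lam') ∧
      (∀ i j k l : Fin m, i < j → j < k → k < l → ¬(0 < lam l i ∧ 0 < lam k j)) := by
  obtain ⟨lam, hlam, hmin, hmax⟩ := isCompact_setOf_isMultiplier.exists_isMinOn_isMaxOn
    ⟨_, isMultiplier_one⟩ (continuous_g v q) (continuous_potential q)
  refine ⟨lam, hlam, fun lam' hlam' => hmin hlam', ?_⟩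
  rintro i j k l hij hjk hkl ⟨hli, hkj⟩
  have hq₀ : ∀ a, q a ≠ 0 := fun a => (hq a).ne'
  set ε := min (q l * lam l i) (q k * lam k j)
  have hε : 0 < ε := lt_min (mul_pos (hq l) hli) (mul_pos (hq k) hkj)
  have hlam' := hlam.uncross hq hij hjk hkl hε.le (min_le_left _ _) (min_le_right _ _)
  have hgain : 0 < ε * ((l : ℕ) - (k : ℕ) : ℝ) * ((j : ℕ) - (i : ℕ) : ℝ) := by
    have hij' : ((i : ℕ) : ℝ) < (j : ℕ) := by exact_mod_cast hij
    have hkl' : ((k : ℕ) : ℝ) < (l : ℕ) := by exact_mod_cast hkl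
    exact mul_pos (mul_pos hε (sub_pos.2 hkl')) (sub_pos.2 hij')
  have hle : potential q (uncross q ε i j k l lam) ≤ potential q lam :=
    hmax ⟨hlam', g_uncross_le v hq₀ (hvmono k l hkl).le hε.le hij.le hjk.le hkl.le⟩
  rw [potential_uncross hq₀] at hle
  linarith

/-- There exists an optimal multiplier with no "crossing" pattern: no indices
`i < j < k < l` with `λ l i > 0` and `λ k j > 0`. -/
theorem exists_optimal_multiplier_no_crossing (m : ℕ) (hm : 1 ≤ m) (v q : Fin m → ℝ)
    (hv0 : ∀ i, 0 ≤ v i) (hvmono : ∀ i j : Fin m, i < j → v i < v j)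
    (hq : ∀ i, 0 < q i) (hqsum : ∑ i, q i = 1) :
    ∃ lam : Fin m → Fin m → ℝ, IsMultiplier lam ∧
      (∀ lam' : Fin m → Fin m → ℝ, IsMultiplier lam' → g v q lam ≤ g v q lam') ∧
      (∀ i j k l : Fin m, i < j → j < k → k < l → ¬(0 < lam l i ∧ 0 < lam k j)) :=
  exists_optimal_multiplier_no_crossing_general m v q hvmono hq
end

section
/- There exists an optimal multiplier λ (minimizing g over all multipliers) that simultaneously satisfies Property 1, Property 2, and Property 3. -/
open Finset

/-!
Think of row `k` as the unit interval `[k, k + 1]` of a line. Columns are filled greedily from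
left to right: column `j` takes the next segment of the line, never below row `j + 1`, until the
rents `q k * (v k - v j)` it collects cover its demand `q j * v j`. Up to the first column whose
demand cannot be met (the pivot) the virtual values vanish; beyond it every row is used up and the
virtual values equal `v`. Consecutive segments give noncrossing, and Property 3 is the statement
that columns past the pivot receive nothing.

Optimality is weak duality, using `∑ i, q i * φ i * x i = ∑ k, q k * (v k * x k - ∑ i ≤ k, λ k i *
(v k - v i) * x i)`. The certificate `x` is `1` from the pivot on and, below it, makes the row holding
the boundary between columns `j` and `j + 1` indifferent between them. Then `i ↦ (v k - v i) * x i`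
is unimodal along each row and peaks exactly where the greedy row spends, while `x = 1` wherever
`φ > 0`.
-/

theorem Nat.rel_of_forall_Ico_rel_succ {α : Type*} (r : α → α → Prop) [Std.Refl r] [IsTrans α r]
    {f : ℕ → α} {a b : ℕ} (hab : a ≤ b) (h : ∀ j, a ≤ j → j < b → r (f j) (f (j + 1))) :
    r (f a) (f b) := by
  induction b, hab using Nat.le_induction with
  | base => exact refl _
  | succ n hn ih =>
    exact _root_.trans (ih fun j hj hjn => h j hj (by omega)) (h n hn (by omega))

theorem Fin.sum_Iic_val_eq_sum_range {β : Type*} [AddCommMonoid β] {m : ℕ} (k : Fin m)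
    (F : ℕ → β) :
    ∑ j ∈ Iic k, F j = ∑ j ∈ range (k + 1), F j := by
  rw [Nat.range_succ_eq_Iic, ← Fin.map_valEmbedding_Iic, sum_map]
  rfl

theorem Fin.sum_Ici_val_eq_sum_Ico {β : Type*} [AddCommMonoid β] {m : ℕ} (i : Fin m)
    (F : ℕ → β) :
    ∑ k ∈ Ici i, F k = ∑ k ∈ Ico (i : ℕ) m, F k := by
  rw [← Fin.map_valEmbedding_Ici, sum_map]
  rfl

section Duality

variable {m : ℕ} {v q : Fin m → ℝ} {lam : Fin m → Fin m → ℝ}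

theorem sum_Ici_sum_eq_sum_Iic_sum {β : Type*} [AddCommMonoid β] (f : Fin m → Fin m → β) :
    ∑ i, ∑ k ∈ Ici i, f i k = ∑ k, ∑ i ∈ Iic k, f i k :=
  sum_comm' (by simp)

theorem sum_mul_le_of_forall_le {ι : Type*} {s : Finset ι} {w a : ι → ℝ} {c : ℝ}
    (hw : ∀ i ∈ s, 0 ≤ w i) (hsum : ∑ i ∈ s, w i = 1) (h : ∀ i ∈ s, 0 < w i → a i ≤ c) :
    ∑ i ∈ s, w i * a i ≤ c := by
  calc ∑ i ∈ s, w i * a i ≤ ∑ i ∈ s, w i * c := by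
        refine sum_le_sum fun i hi => ?_
        rcases (hw i hi).eq_or_lt with h0 | hpos
        · simp [← h0]
        · exact mul_le_mul_of_nonneg_left (h i hi hpos) hpos.le
    _ = c := by rw [← sum_mul, hsum, one_mul]

theorem le_sum_mul_of_forall_le {ι : Type*} {s : Finset ι} {w a : ι → ℝ} {c : ℝ}
    (hw : ∀ i ∈ s, 0 ≤ w i) (hsum : ∑ i ∈ s, w i = 1) (h : ∀ i ∈ s, 0 < w i → c ≤ a i) :
    c ≤ ∑ i ∈ s, w i * a i := by
  have := sum_mul_le_of_forall_le (a := fun i => -a i) (c := -c) hw hsum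
    (fun i hi hpos => neg_le_neg (h i hi hpos))
  simp only [mul_neg, sum_neg_distrib] at this
  linarith

theorem sum_mul_phi_mul_eq (hq : ∀ i, q i ≠ 0) (x : Fin m → ℝ) :
    ∑ i, q i * phi v q lam i * x i
      = ∑ k, q k * (v k * x k - ∑ i ∈ Iic k, lam k i * ((v k - v i) * x i)) := by
  have hcol : ∀ i, q i * phi v q lam i * x i
      = q i * v i * x i - ∑ k ∈ Ici i, q k * (v k - v i) * lam k i * x i := by
    intro i
    rw [phi, ← sum_mul]
    field_simp [hq i]
  have hrow' : ∀ k, q k * (v k * x k - ∑ i ∈ Iic k, lam k i * ((v k - v i) * x i))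
      = q k * v k * x k - ∑ i ∈ Iic k, q k * (v k - v i) * lam k i * x i := by
    intro k
    rw [mul_sub, mul_sum]
    congr 1
    · ring
    · exact sum_congr rfl fun i _ => by ring
  simp only [hcol, hrow', sum_sub_distrib, sum_Ici_sum_eq_sum_Iic_sum]

theorem sum_mul_phi_mul_le_g {x : Fin m → ℝ} (hx : IsAlloc x) :
    ∑ i, q i * phi v q lam i * x i ≤ g v q lam := by
  refine le_csSup ⟨∑ i, |q i * phi v q lam i|, ?_⟩ ⟨x, hx, rfl⟩
  rintro s ⟨y, hy, rfl⟩
  refine sum_le_sum fun i _ => ?_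
  calc q i * phi v q lam i * y i ≤ |q i * phi v q lam i * y i| := le_abs_self _
    _ = |q i * phi v q lam i| * |y i| := abs_mul _ _
    _ ≤ |q i * phi v q lam i| := by
        refine mul_le_of_le_one_right (abs_nonneg _) ?_
        rw [abs_le]
        exact ⟨by linarith [(hy.2 i).1], (hy.2 i).2⟩

theorem g_le_sum_mul_phi (hq : ∀ i, 0 ≤ q i) (hphi : ∀ i, 0 ≤ phi v q lam i) :
    g v q lam ≤ ∑ i, q i * phi v q lam i := by
  refine Real.sSup_le ?_ (sum_nonneg fun i _ => mul_nonneg (hq i) (hphi i))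
  rintro s ⟨x, hx, rfl⟩
  exact sum_le_sum fun i _ =>
    mul_le_of_le_one_right (mul_nonneg (hq i) (hphi i)) (hx.2 i).2

/-- Weak duality: `x` certifies the optimality of `lam` through complementary slackness. -/
theorem IsMultiplier.g_le_of_certificate (hlam : IsMultiplier lam) (hq : ∀ i, 0 < q i)
    {x : Fin m → ℝ} (hx : IsAlloc x) (hphi : ∀ i, 0 ≤ phi v q lam i)
    (hslack : ∀ i, x i < 1 → phi v q lam i = 0)
    (hbest : ∀ k s i, i ≤ k → 0 < lam k s → (v k - v i) * x i ≤ (v k - v s) * x s)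
    {lam' : Fin m → Fin m → ℝ} (hlam' : IsMultiplier lam') : g v q lam ≤ g v q lam' := by
  have hqne : ∀ i, q i ≠ 0 := fun i => (hq i).ne'
  have hattained : ∑ i, q i * phi v q lam i = ∑ i, q i * phi v q lam i * x i := by
    refine sum_congr rfl fun i _ => ?_
    rcases (hx.2 i).2.lt_or_eq with hlt | heq
    · simp [hslack i hlt]
    · simp [heq]
  have hrows : ∑ i, q i * phi v q lam i * x i ≤ ∑ i, q i * phi v q lam' i * x i := by
    rw [sum_mul_phi_mul_eq hqne, sum_mul_phi_mul_eq hqne]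
    refine sum_le_sum fun k _ => mul_le_mul_of_nonneg_left (sub_le_sub_left ?_ _) (hq k).le
    refine sum_mul_le_of_forall_le (fun i _ => hlam'.1 k i) (hlam'.2.2 k) fun i hi _ => ?_
    refine le_sum_mul_of_forall_le (fun s _ => hlam.1 k s) (hlam.2.2 k) fun s _ hs => ?_
    exact hbest k s i (mem_Iic.mp hi) hs
  calc g v q lam ≤ ∑ i, q i * phi v q lam i := g_le_sum_mul_phi (fun i => (hq i).le) hphi
    _ ≤ ∑ i, q i * phi v q lam' i * x i := hattained ▸ hrows
    _ ≤ g v q lam' := sum_mul_phi_mul_le_g hx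

end Duality

namespace Greedy

/-- Row `k` of the multiplier is modelled by the unit interval `[k, k + 1]` of the line;
`overlap a b k` is the length of `[a, b] ∩ [k, k + 1]`. -/
noncomputable def overlap (a b : ℝ) (k : ℕ) : ℝ := max 0 (min b (k + 1) - max a k)

section Overlap

variable {a b c : ℝ} {k : ℕ}

theorem overlap_nonneg : 0 ≤ overlap a b k := le_max_left _ _

theorem overlap_le_one : overlap a b k ≤ 1 :=
  max_le zero_le_one (by linarith [min_le_right b (k + 1 : ℝ), le_max_right a (k : ℝ)])

theorem overlap_self : overlap a a k = 0 :=
  max_eq_left (by linarith [min_le_left a (k + 1 : ℝ), le_max_left a (k : ℝ)])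

theorem overlap_eq_zero_of_succ_le (h : (k : ℝ) + 1 ≤ a) : overlap a b k = 0 :=
  max_eq_left (by linarith [min_le_right b (k + 1 : ℝ), le_max_left a (k : ℝ)])

theorem overlap_eq_one (ha : a ≤ k) (hb : (k : ℝ) + 1 ≤ b) : overlap a b k = 1 := by
  rw [overlap, min_eq_right hb, max_eq_right ha]
  norm_num

theorem lt_and_lt_of_overlap_pos (h : 0 < overlap a b k) : a < k + 1 ∧ (k : ℝ) < b := by
  by_contra! hc
  have : min b (k + 1 : ℝ) - max a k ≤ 0 := by
    rcases lt_or_ge a (k + 1) with ha | ha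
    · linarith [min_le_left b (k + 1 : ℝ), le_max_right a (k : ℝ), hc ha]
    · linarith [min_le_right b (k + 1 : ℝ), le_max_left a (k : ℝ)]
  exact h.ne' (max_eq_left this)

theorem overlap_add (hac : a ≤ c) (hcb : c ≤ b) :
    overlap a c k + overlap c b k = overlap a b k := by
  simp only [overlap, max_def, min_def]
  split_ifs <;> linarith

theorem overlap_max_of_le (h : c ≤ k) : overlap (max a c) b k = overlap a b k := by
  rw [overlap, overlap, max_assoc, max_eq_right h]

end Overlap

variable (M : ℕ) (vv qq : ℕ → ℝ)

noncomputable def demand (j : ℕ) : ℝ := qq j * vv j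

noncomputable def supply (j : ℕ) (a b : ℝ) : ℝ :=
  ∑ k ∈ range M, qq k * (vv k - vv j) * overlap a b k

noncomputable def fillEnd (j : ℕ) (a : ℝ) : ℝ :=
  if demand vv qq j ≤ supply M vv qq j a M then
    sInf {b : ℝ | a ≤ b ∧ demand vv qq j ≤ supply M vv qq j a b}
  else M

/-- Column `j` occupies `[colStart j, colEnd j]`; starting no earlier than `j + 1` makes it draw
only on rows `k > j`. -/
noncomputable def colSpan : ℕ → ℝ × ℝ
  | 0 => (1, fillEnd M vv qq 0 1)
  | j + 1 =>
    let t := max (colSpan j).2 (j + 2)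
    (t, fillEnd M vv qq (j + 1) t)

noncomputable def colStart (j : ℕ) : ℝ := (colSpan M vv qq j).1

noncomputable def colEnd (j : ℕ) : ℝ := (colSpan M vv qq j).2

structure Admissible : Prop where
  qq_pos : ∀ n, 0 < qq n
  vv_nonneg : ∀ n, 0 ≤ vv n
  vv_lt : ∀ x y, x < y → y < M → vv x < vv y

variable {M vv qq}

section Supply

variable {j : ℕ} {a : ℝ}

theorem continuous_supply : Continuous (supply M vv qq j a) := by
  unfold supply overlap
  fun_prop

theorem supply_self : supply M vv qq j a a = 0 := by
  simp [supply, overlap_self]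

theorem Admissible.vv_le_vv (H : Admissible M vv qq) {x y : ℕ} (hxy : x ≤ y) (hy : y < M) :
    vv x ≤ vv y := by
  rcases hxy.eq_or_lt with rfl | h
  · exact le_rfl
  · exact (H.vv_lt x y h hy).le

theorem Admissible.demand_nonneg (H : Admissible M vv qq) (j : ℕ) : 0 ≤ demand vv qq j :=
  mul_nonneg (H.qq_pos j).le (H.vv_nonneg j)

theorem isClosed_fillSet :
    IsClosed {b : ℝ | a ≤ b ∧ demand vv qq j ≤ supply M vv qq j a b} :=
  isClosed_Ici.inter (isClosed_le continuous_const continuous_supply)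

theorem bddBelow_fillSet : BddBelow {b : ℝ | a ≤ b ∧ demand vv qq j ≤ supply M vv qq j a b} :=
  ⟨a, fun _ hb => hb.1⟩

theorem le_fillEnd (ha : a ≤ M) : a ≤ fillEnd M vv qq j a := by
  unfold fillEnd
  split_ifs with h
  · exact le_csInf ⟨M, ha, h⟩ fun _ hb => hb.1
  · exact ha

theorem fillEnd_le (ha : a ≤ M) : fillEnd M vv qq j a ≤ M := by
  unfold fillEnd
  split_ifs with h
  · exact csInf_le bddBelow_fillSet ⟨ha, h⟩
  · exact le_rfl

theorem fillEnd_of_supply_lt (h : supply M vv qq j a M < demand vv qq j) :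
    fillEnd M vv qq j a = M := by
  rw [fillEnd, if_neg h.not_ge]

/-- The supply vanishes at `a`, so the intermediate value theorem meets the demand somewhere in
`[a, fillEnd]`, and by minimality at `fillEnd` itself. -/
theorem supply_fillEnd (hd : 0 ≤ demand vv qq j) (ha : a ≤ M)
    (h : demand vv qq j ≤ supply M vv qq j a M) :
    supply M vv qq j a (fillEnd M vv qq j a) = demand vv qq j := by
  have hF : fillEnd M vv qq j a = sInf {b : ℝ | a ≤ b ∧ demand vv qq j ≤ supply M vv qq j a b} :=
    if_pos h
  obtain ⟨haF, hdF⟩ : a ≤ fillEnd M vv qq j a ∧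
      demand vv qq j ≤ supply M vv qq j a (fillEnd M vv qq j a) :=
    hF ▸ isClosed_fillSet.csInf_mem ⟨M, ha, h⟩ bddBelow_fillSet
  obtain ⟨c, ⟨hac, hcF⟩, hc⟩ := intermediate_value_Icc haF continuous_supply.continuousOn
    ⟨supply_self (M := M) (vv := vv) (qq := qq) (j := j) ▸ hd, hdF⟩
  have hFc : fillEnd M vv qq j a ≤ c := hF ▸ csInf_le bddBelow_fillSet ⟨hac, hc.ge⟩
  rwa [le_antisymm hcF hFc] at hc

theorem supply_fillEnd_le (hd : 0 ≤ demand vv qq j) (ha : a ≤ M) :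
    supply M vv qq j a (fillEnd M vv qq j a) ≤ demand vv qq j := by
  by_cases h : demand vv qq j ≤ supply M vv qq j a M
  · exact (supply_fillEnd hd ha h).le
  · rw [fillEnd_of_supply_lt (not_le.mp h)]
    exact (not_le.mp h).le

theorem fillEnd_natCast_self : fillEnd M vv qq j M = M := by
  by_cases h : demand vv qq j ≤ supply M vv qq j M M
  · exact le_antisymm (fillEnd_le le_rfl) (le_fillEnd le_rfl)
  · exact fillEnd_of_supply_lt (not_le.mp h)

end Supply

section Columns

variable {i j : ℕ}

theorem colStart_zero : colStart M vv qq 0 = 1 := rfl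

theorem colStart_succ (j : ℕ) : colStart M vv qq (j + 1) = max (colEnd M vv qq j) (j + 2) := rfl

theorem colEnd_eq_fillEnd (j : ℕ) :
    colEnd M vv qq j = fillEnd M vv qq j (colStart M vv qq j) := by
  cases j <;> rfl

theorem succ_le_colStart (j : ℕ) : (j : ℝ) + 1 ≤ colStart M vv qq j := by
  cases j with
  | zero => simp [colStart_zero]
  | succ n =>
    rw [colStart_succ]
    push_cast
    linarith [le_max_right (colEnd M vv qq n) ((n : ℝ) + 2)]

theorem colStart_le_and_colEnd_le (hj : j < M) :
    colStart M vv qq j ≤ M ∧ colEnd M vv qq j ≤ M := by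
  induction j with
  | zero =>
    have h : colStart M vv qq 0 ≤ M := by rw [colStart_zero]; exact_mod_cast hj
    exact ⟨h, colEnd_eq_fillEnd 0 ▸ fillEnd_le h⟩
  | succ n ih =>
    have h : colStart M vv qq (n + 1) ≤ M := by
      rw [colStart_succ]
      refine max_le (ih (by omega)).2 ?_
      exact_mod_cast (show n + 2 ≤ M by omega)
    exact ⟨h, colEnd_eq_fillEnd _ ▸ fillEnd_le h⟩

theorem colStart_le_colEnd (hj : j < M) : colStart M vv qq j ≤ colEnd M vv qq j :=
  colEnd_eq_fillEnd j ▸ le_fillEnd (colStart_le_and_colEnd_le hj).1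

theorem colEnd_le_colStart (hij : i < j) (hj : j < M) : colEnd M vv qq i ≤ colStart M vv qq j := by
  induction j, hij using Nat.le_induction with
  | base => exact le_max_left _ _
  | succ n hn ih =>
    calc colEnd M vv qq i ≤ colStart M vv qq n := ih (by omega)
      _ ≤ colEnd M vv qq n := colStart_le_colEnd (by omega)
      _ ≤ colStart M vv qq (n + 1) := le_max_left _ _

theorem colEnd_mono (hij : i ≤ j) (hj : j < M) : colEnd M vv qq i ≤ colEnd M vv qq j := by
  rcases hij.eq_or_lt with rfl | hlt
  · exact le_rfl
  · exact (colEnd_le_colStart hlt hj).trans (colStart_le_colEnd hj)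

theorem one_le_colEnd (hj : j < M) : 1 ≤ colEnd M vv qq j := by
  have := succ_le_colStart (M := M) (vv := vv) (qq := qq) j
  linarith [colStart_le_colEnd (vv := vv) (qq := qq) hj, (Nat.cast_nonneg j : (0 : ℝ) ≤ j)]

end Columns

variable (M vv qq) in
open Classical in
noncomputable def pivot : ℕ :=
  Nat.find (⟨M - 1, Or.inr rfl⟩ :
    ∃ j, supply M vv qq j (colStart M vv qq j) M < demand vv qq j ∨ j = M - 1)

section Pivot

variable {j : ℕ}

theorem pivot_le : pivot M vv qq ≤ M - 1 := by
  classical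
  exact Nat.find_le (Or.inr rfl)

theorem pivot_spec :
    supply M vv qq (pivot M vv qq) (colStart M vv qq (pivot M vv qq)) M
      < demand vv qq (pivot M vv qq) ∨ pivot M vv qq = M - 1 := by
  classical
  exact Nat.find_spec (p := fun j =>
    supply M vv qq j (colStart M vv qq j) M < demand vv qq j ∨ j = M - 1) ⟨M - 1, Or.inr rfl⟩

theorem demand_le_supply_of_lt_pivot (hj : j < pivot M vv qq) :
    demand vv qq j ≤ supply M vv qq j (colStart M vv qq j) M := by
  classical
  have := Nat.find_min (p := fun j =>
    supply M vv qq j (colStart M vv qq j) M < demand vv qq j ∨ j = M - 1) ⟨M - 1, Or.inr rfl⟩ hj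
  exact not_lt.mp (not_or.mp this).1

theorem colEnd_eq_of_pivot_le (hj : pivot M vv qq ≤ j) (hjM : j + 1 < M) :
    colEnd M vv qq j = M := by
  induction j, hj using Nat.le_induction with
  | base =>
    rcases pivot_spec (M := M) (vv := vv) (qq := qq) with h | h
    · rw [colEnd_eq_fillEnd]
      exact fillEnd_of_supply_lt h
    · omega
  | succ n _ ih =>
    have hstart : colStart M vv qq (n + 1) = M := by
      rw [colStart_succ, ih (by omega), max_eq_left]
      exact_mod_cast (show n + 2 ≤ M by omega)
    rw [colEnd_eq_fillEnd, hstart, fillEnd_natCast_self]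

theorem colStart_eq_of_pivot_lt (hj : pivot M vv qq < j) (hjM : j < M) :
    colStart M vv qq j = M := by
  obtain ⟨n, rfl⟩ : ∃ n, j = n + 1 := ⟨j - 1, by omega⟩
  rw [colStart_succ, colEnd_eq_of_pivot_le (by omega) hjM, max_eq_left]
  exact_mod_cast (show n + 2 ≤ M by omega)

theorem colEnd_eq_colStart_of_pivot_lt (hj : pivot M vv qq < j) (hjM : j < M) :
    colEnd M vv qq j = colStart M vv qq j := by
  rw [colEnd_eq_fillEnd, colStart_eq_of_pivot_lt hj hjM, fillEnd_natCast_self]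

end Pivot

variable (M vv qq) in
noncomputable def delivered (j : ℕ) : ℝ :=
  supply M vv qq j (colStart M vv qq j) (colEnd M vv qq j)

section Delivered

variable {j : ℕ}

theorem Admissible.delivered_eq_demand (H : Admissible M vv qq) (hj : j < pivot M vv qq) :
    delivered M vv qq j = demand vv qq j := by
  have hjM : j < M := by have := pivot_le (M := M) (vv := vv) (qq := qq); omega
  rw [delivered, colEnd_eq_fillEnd]
  exact supply_fillEnd (H.demand_nonneg j) (colStart_le_and_colEnd_le hjM).1
    (demand_le_supply_of_lt_pivot hj)

theorem Admissible.delivered_le_demand (H : Admissible M vv qq) (hj : j < M) :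
    delivered M vv qq j ≤ demand vv qq j := by
  rw [delivered, colEnd_eq_fillEnd]
  exact supply_fillEnd_le (H.demand_nonneg j) (colStart_le_and_colEnd_le hj).1

theorem delivered_eq_zero_of_pivot_lt (hj : pivot M vv qq < j) (hjM : j < M) :
    delivered M vv qq j = 0 := by
  rw [delivered, colEnd_eq_colStart_of_pivot_lt hj hjM, supply_self]

end Delivered

variable (M vv qq) in
noncomputable def share (k j : ℕ) : ℝ := overlap (colStart M vv qq j) (colEnd M vv qq j) k

variable (M vv qq) in
noncomputable def rowSpent (k n : ℕ) : ℝ := ∑ j ∈ range n, share M vv qq k j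

variable (M vv qq) in
noncomputable def mult (k j : ℕ) : ℝ :=
  if j < k then share M vv qq k j else if j = k then 1 - rowSpent M vv qq k k else 0

section Rows

variable {i j k l n : ℕ}

theorem share_eq_zero_of_le (h : k ≤ j) : share M vv qq k j = 0 :=
  overlap_eq_zero_of_succ_le
    (by linarith [succ_le_colStart (M := M) (vv := vv) (qq := qq) j, (Nat.cast_le.mpr h : (k : ℝ) ≤ j)])

theorem share_eq_zero_of_pivot_lt (hj : pivot M vv qq < j) (hjM : j < M) :
    share M vv qq k j = 0 := by
  rw [share, colEnd_eq_colStart_of_pivot_lt hj hjM, overlap_self]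

theorem le_pivot_of_share_pos (hj : j < M) (h : 0 < share M vv qq k j) : j ≤ pivot M vv qq := by
  by_contra! hlt
  exact h.ne' (share_eq_zero_of_pivot_lt hlt hj)

/-- The columns before `n + 1` tile `[1, colEnd n]` on every row they may use. -/
theorem rowSpent_succ_eq_overlap (hnk : n + 1 ≤ k) (hk : k < M) :
    rowSpent M vv qq k (n + 1) = overlap 1 (colEnd M vv qq n) k := by
  induction n with
  | zero => simp [rowSpent, share, colStart_zero]
  | succ n ih =>
    rw [rowSpent, sum_range_succ, ← rowSpent, ih (by omega), share, colStart_succ,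
      overlap_max_of_le (by exact_mod_cast hnk), overlap_add (one_le_colEnd (by omega))
        (colEnd_mono (by omega) (by omega))]

theorem rowSpent_self_le_one (hk : k < M) : rowSpent M vv qq k k ≤ 1 := by
  cases k with
  | zero => simp [rowSpent]
  | succ n => exact (rowSpent_succ_eq_overlap le_rfl hk).trans_le overlap_le_one

theorem rowSpent_self_eq_one_of_pivot_lt (hk : pivot M vv qq < k) (hkM : k < M) :
    rowSpent M vv qq k k = 1 := by
  obtain ⟨n, rfl⟩ : ∃ n, k = n + 1 := ⟨k - 1, by omega⟩
  rw [rowSpent_succ_eq_overlap le_rfl hkM, colEnd_eq_of_pivot_le (by omega) hkM]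
  exact overlap_eq_one (by exact_mod_cast (Nat.le_add_left 1 n)) (by exact_mod_cast hkM)

theorem mult_of_lt (h : j < k) : mult M vv qq k j = share M vv qq k j := if_pos h

theorem mult_self (k : ℕ) : mult M vv qq k k = 1 - rowSpent M vv qq k k := by
  rw [mult, if_neg (lt_irrefl k), if_pos rfl]

theorem mult_eq_zero_of_lt (h : k < j) : mult M vv qq k j = 0 := by
  rw [mult, if_neg (by omega), if_neg (by omega)]

theorem mult_nonneg (hk : k < M) (j : ℕ) : 0 ≤ mult M vv qq k j := by
  unfold mult
  split_ifs
  · exact overlap_nonneg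
  · linarith [rowSpent_self_le_one (vv := vv) (qq := qq) hk]
  · exact le_rfl

theorem sum_range_mult (k : ℕ) : ∑ j ∈ range (k + 1), mult M vv qq k j = 1 := by
  rw [sum_range_succ, mult_self, sum_congr rfl fun j hj => mult_of_lt (mem_range.mp hj),
    ← rowSpent]
  ring

theorem mult_eq_zero_of_pivot_lt (hi : pivot M vv qq < i) (hiM : i < M) (hk : k < M) :
    mult M vv qq k i = 0 := by
  rcases lt_trichotomy i k with h | rfl | h
  · rw [mult_of_lt h, share_eq_zero_of_pivot_lt hi hiM]
  · rw [mult_self, rowSpent_self_eq_one_of_pivot_lt hi hk, sub_self]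
  · exact mult_eq_zero_of_lt h

theorem delivered_eq_sum_mult (j : ℕ) :
    delivered M vv qq j = ∑ k ∈ range M, qq k * (vv k - vv j) * mult M vv qq k j := by
  unfold delivered supply
  refine sum_congr rfl fun k _ => ?_
  rcases lt_trichotomy j k with h | rfl | h
  · rw [mult_of_lt h, share]
  · rw [sub_self, mul_zero, zero_mul, zero_mul]
  · rw [mult_eq_zero_of_lt h, ← share, share_eq_zero_of_le h.le]

/-- A column `i` reaching row `l` ends before column `j > i` starts, so `j` feeds only rows
`≥ l`. -/
theorem not_mult_pos_and_mult_pos (hij : i < j) (hjk : j < k) (hkl : k < l) (hl : l < M) :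
    ¬(0 < mult M vv qq l i ∧ 0 < mult M vv qq k j) := by
  rintro ⟨hli, hkj⟩
  rw [mult_of_lt (by omega)] at hli hkj
  have h1 := (lt_and_lt_of_overlap_pos hli).2
  have h2 := (lt_and_lt_of_overlap_pos hkj).1
  have h3 := colEnd_le_colStart (vv := vv) (qq := qq) hij (by omega : j < M)
  have : (l : ℝ) < k + 1 := by linarith
  have : l < k + 1 := by exact_mod_cast this
  omega

end Rows

variable (M vv qq) in
/-- The row containing the end of column `j`, but at least `j + 1`. -/
noncomputable def linkRow (j : ℕ) : ℕ := max (j + 1) (⌈colEnd M vv qq j⌉.toNat - 1)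

variable (M vv qq) in
noncomputable def linkRatio (j : ℕ) : ℝ :=
  (vv (linkRow M vv qq j) - vv (j + 1)) / (vv (linkRow M vv qq j) - vv j)

variable (M vv qq) in
/-- The dual allocation, built down from `1` at the pivot so that each link row is indifferent
between its two columns: `(v R - v j) * x j = (v R - v (j + 1)) * x (j + 1)`. -/
noncomputable def dual (n : ℕ) : ℝ := ∏ j ∈ Ico n (pivot M vv qq), linkRatio M vv qq j

section Dual

variable {j k n : ℕ}

theorem succ_le_linkRow (j : ℕ) : j + 1 ≤ linkRow M vv qq j := le_max_left _ _

theorem linkRow_lt (hj : j < pivot M vv qq) : linkRow M vv qq j < M := by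
  have hP := pivot_le (M := M) (vv := vv) (qq := qq)
  have hf : ⌈colEnd M vv qq j⌉ ≤ (M : ℤ) :=
    Int.ceil_le.mpr (by exact_mod_cast (colStart_le_and_colEnd_le (by omega)).2)
  have : ⌈colEnd M vv qq j⌉.toNat ≤ M := by rw [Int.toNat_le]; exact hf
  unfold linkRow
  omega

theorem linkRow_le (hjk : j + 1 ≤ k) (hf : colEnd M vv qq j ≤ k + 1) : linkRow M vv qq j ≤ k := by
  have hc : ⌈colEnd M vv qq j⌉ ≤ (k : ℤ) + 1 := Int.ceil_le.mpr (by push_cast; linarith)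
  have : ⌈colEnd M vv qq j⌉.toNat ≤ k + 1 := by rw [Int.toNat_le]; exact_mod_cast hc
  unfold linkRow
  omega

theorem le_linkRow (hf : (k : ℝ) < colEnd M vv qq j) : k ≤ linkRow M vv qq j := by
  have hc : (k : ℤ) < ⌈colEnd M vv qq j⌉ := Int.lt_ceil.mpr hf
  have : k + 1 ≤ ⌈colEnd M vv qq j⌉.toNat := by
    rw [Int.le_toNat (by omega)]; push_cast; omega
  unfold linkRow
  omega

theorem Admissible.vv_lt_vv_linkRow (H : Admissible M vv qq) (hj : j < pivot M vv qq) :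
    vv j < vv (linkRow M vv qq j) :=
  H.vv_lt _ _ (succ_le_linkRow j) (linkRow_lt hj)

theorem Admissible.linkRatio_nonneg (H : Admissible M vv qq) (hj : j < pivot M vv qq) :
    0 ≤ linkRatio M vv qq j :=
  div_nonneg (by linarith [H.vv_le_vv (succ_le_linkRow j) (linkRow_lt hj)]) (by linarith [H.vv_lt_vv_linkRow hj])

theorem Admissible.linkRatio_le_one (H : Admissible M vv qq) (hj : j < pivot M vv qq) :
    linkRatio M vv qq j ≤ 1 := by
  rw [linkRatio, div_le_one (by linarith [H.vv_lt_vv_linkRow hj])]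
  linarith [H.vv_lt j (j + 1) (by omega)
    ((succ_le_linkRow (M := M) (vv := vv) (qq := qq) j).trans_lt (linkRow_lt hj))]

theorem Admissible.dual_nonneg (H : Admissible M vv qq) (n : ℕ) : 0 ≤ dual M vv qq n :=
  prod_nonneg fun _ hj => H.linkRatio_nonneg (mem_Ico.mp hj).2

theorem Admissible.dual_le_one (H : Admissible M vv qq) (n : ℕ) : dual M vv qq n ≤ 1 :=
  prod_le_one (fun _ hj => H.linkRatio_nonneg (mem_Ico.mp hj).2)
    fun _ hj => H.linkRatio_le_one (mem_Ico.mp hj).2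

theorem dual_of_pivot_le (h : pivot M vv qq ≤ n) : dual M vv qq n = 1 := by
  rw [dual, Ico_eq_empty (by omega), prod_empty]

theorem dual_of_lt_pivot (h : n < pivot M vv qq) :
    dual M vv qq n = linkRatio M vv qq n * dual M vv qq (n + 1) :=
  prod_eq_prod_Ico_succ_bot h _

theorem Admissible.monotone_dual (H : Admissible M vv qq) : Monotone (dual M vv qq) := by
  refine monotone_nat_of_le_succ fun n => ?_
  rcases lt_or_ge n (pivot M vv qq) with h | h
  · rw [dual_of_lt_pivot h]
    exact mul_le_of_le_one_left (H.dual_nonneg _) (H.linkRatio_le_one h)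
  · rw [dual_of_pivot_le h, dual_of_pivot_le (by omega)]

theorem dual_eq_zero_of_rowSpent_lt (hk : k < M) (hspent : rowSpent M vv qq k k < 1)
    (hnk : n < k) : dual M vv qq n = 0 := by
  have hkP : k ≤ pivot M vv qq := by
    by_contra! h
    exact hspent.ne (rowSpent_self_eq_one_of_pivot_lt h hk)
  obtain ⟨r, rfl⟩ : ∃ r, k = r + 1 := ⟨k - 1, by omega⟩
  rw [rowSpent_succ_eq_overlap le_rfl hk] at hspent
  have hend : colEnd M vv qq r < r + 1 + 1 := by
    by_contra! h
    exact hspent.ne (overlap_eq_one (by exact_mod_cast Nat.le_add_left 1 r) (by exact_mod_cast h))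
  have hlink : linkRow M vv qq r = r + 1 :=
    le_antisymm (linkRow_le le_rfl (by exact_mod_cast hend.le)) (succ_le_linkRow r)
  refine prod_eq_zero (i := r) (mem_Ico.mpr ⟨by omega, by omega⟩) ?_
  rw [linkRatio, hlink, sub_self, zero_div]

end Dual

variable (M vv qq) in
noncomputable def gain (k s : ℕ) : ℝ := (vv k - vv s) * dual M vv qq s

section Gain

variable {i j k s : ℕ}

theorem Admissible.gain_succ_sub_gain (H : Admissible M vv qq) (hj : j < pivot M vv qq) (k : ℕ) :
    gain M vv qq k (j + 1) - gain M vv qq k j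
      = (vv k - vv (linkRow M vv qq j)) * (dual M vv qq (j + 1) - dual M vv qq j) := by
  have hpos := sub_pos.mpr (H.vv_lt_vv_linkRow hj)
  rw [gain, gain, dual_of_lt_pivot hj, linkRatio]
  field_simp
  ring

theorem Admissible.gain_le_gain_succ (H : Admissible M vv qq) (hj : j < pivot M vv qq)
    (hR : linkRow M vv qq j ≤ k) (hk : k < M) : gain M vv qq k j ≤ gain M vv qq k (j + 1) := by
  have hv := H.vv_le_vv hR hk
  have hx := H.monotone_dual (Nat.le_succ j)
  nlinarith [H.gain_succ_sub_gain hj k]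

theorem Admissible.gain_succ_le_gain (H : Admissible M vv qq) (hjM : j + 1 < M)
    (hR : j < pivot M vv qq → k ≤ linkRow M vv qq j) :
    gain M vv qq k (j + 1) ≤ gain M vv qq k j := by
  rcases lt_or_ge j (pivot M vv qq) with hj | hj
  · have hv := H.vv_le_vv (hR hj) (linkRow_lt hj)
    have hx := H.monotone_dual (Nat.le_succ j)
    nlinarith [H.gain_succ_sub_gain hj k]
  · rw [gain, gain, dual_of_pivot_le hj, dual_of_pivot_le (by omega)]
    linarith [H.vv_lt j (j + 1) (by omega) hjM]

theorem Admissible.gain_le_gain_of_share_pos_of_le (H : Admissible M vv qq) (hk : k < M)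
    (his : i ≤ s) (hsk : s < k) (hs : 0 < share M vv qq k s) :
    gain M vv qq k i ≤ gain M vv qq k s := by
  have hsP := le_pivot_of_share_pos (by omega) hs
  have hstart := (lt_and_lt_of_overlap_pos hs).1
  refine Nat.rel_of_forall_Ico_rel_succ (· ≤ ·) his fun j _ hjs =>
    H.gain_le_gain_succ (by omega) (linkRow_le (by omega) ?_) hk
  linarith [colEnd_le_colStart (M := M) (vv := vv) (qq := qq) hjs (by omega)]

theorem Admissible.gain_le_gain_of_share_pos_of_ge (H : Admissible M vv qq) (hk : k < M)
    (hsi : s ≤ i) (hik : i ≤ k) (hs : 0 < share M vv qq k s) :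
    gain M vv qq k i ≤ gain M vv qq k s := by
  have hend := (lt_and_lt_of_overlap_pos hs).2
  refine Nat.rel_of_forall_Ico_rel_succ (· ≥ ·) hsi fun j hsj hji =>
    H.gain_succ_le_gain (by omega) fun _ => le_linkRow ?_
  linarith [colEnd_mono (vv := vv) (qq := qq) hsj (by omega : j < M)]

theorem Admissible.gain_le_gain_of_mult_pos (H : Admissible M vv qq) (hk : k < M) (hik : i ≤ k)
    (hs : 0 < mult M vv qq k s) : gain M vv qq k i ≤ gain M vv qq k s := by
  rcases lt_trichotomy s k with hsk | rfl | hks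
  · rw [mult_of_lt hsk] at hs
    rcases le_total i s with his | hsi
    · exact H.gain_le_gain_of_share_pos_of_le hk his hsk hs
    · exact H.gain_le_gain_of_share_pos_of_ge hk hsi hik hs
  · rcases hik.eq_or_lt with rfl | hlt
    · exact le_rfl
    · rw [mult_self, sub_pos] at hs
      rw [gain, gain, dual_eq_zero_of_rowSpent_lt hk hs hlt, sub_self]
      simp
  · exact absurd hs (mult_eq_zero_of_lt hks).not_gt

end Gain

section FinLevel

variable {m : ℕ} {v q : Fin m → ℝ}

noncomputable def padded (f : Fin m → ℝ) (d : ℝ) (n : ℕ) : ℝ := if h : n < m then f ⟨n, h⟩ else d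

theorem padded_val (f : Fin m → ℝ) (d : ℝ) (i : Fin m) : padded f d i = f i := dif_pos i.isLt

theorem admissible_padded (hv0 : ∀ i, 0 ≤ v i) (hvmono : ∀ i j : Fin m, i < j → v i < v j)
    (hq : ∀ i, 0 < q i) : Admissible m (padded v 0) (padded q 1) where
  qq_pos n := by unfold padded; split_ifs <;> simp [hq]
  vv_nonneg n := by unfold padded; split_ifs <;> simp [hv0]
  vv_lt x y hxy hy := by
    rw [padded, padded, dif_pos (hxy.trans hy), dif_pos hy]
    exact hvmono _ _ hxy

variable (v q) in
noncomputable def greedyLam (k j : Fin m) : ℝ := mult m (padded v 0) (padded q 1) k j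

variable (v q) in
noncomputable def greedyAlloc (i : Fin m) : ℝ := dual m (padded v 0) (padded q 1) i

theorem isMultiplier_greedyLam : IsMultiplier (greedyLam v q) :=
  ⟨fun k j => mult_nonneg k.isLt j, fun _ _ hkj => mult_eq_zero_of_lt hkj,
    fun k => (Fin.sum_Iic_val_eq_sum_range k _).trans (sum_range_mult k)⟩

theorem phi_greedyLam (i : Fin m) :
    phi v q (greedyLam v q) i
      = v i - 1 / q i * delivered m (padded v 0) (padded q 1) i := by
  have hbelow : ∑ k ∈ range i, padded q 1 k * (padded v 0 k - padded v 0 i)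
      * mult m (padded v 0) (padded q 1) k i = 0 :=
    sum_eq_zero fun k hk => by rw [mult_eq_zero_of_lt (mem_range.mp hk), mul_zero]
  rw [phi, delivered_eq_sum_mult, ← sum_range_add_sum_Ico _ i.isLt.le, hbelow, zero_add,
    ← Fin.sum_Ici_val_eq_sum_Ico]
  simp only [greedyLam, padded_val]

variable (H : Admissible m (padded v 0) (padded q 1))
include H

theorem phi_greedyLam_of_lt_pivot {i : Fin m} (hi : (i : ℕ) < pivot m (padded v 0) (padded q 1)) :
    phi v q (greedyLam v q) i = 0 := by
  have hq : q i ≠ 0 := padded_val q 1 i ▸ (H.qq_pos i).ne'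
  rw [phi_greedyLam, H.delivered_eq_demand hi, demand, padded_val, padded_val, one_div,
    inv_mul_cancel_left₀ hq, sub_self]

theorem phi_greedyLam_nonneg (i : Fin m) : 0 ≤ phi v q (greedyLam v q) i := by
  have hq : 0 < q i := padded_val q 1 i ▸ H.qq_pos i
  rcases lt_trichotomy (i : ℕ) (pivot m (padded v 0) (padded q 1)) with h | h | h
  · exact (phi_greedyLam_of_lt_pivot H h).ge
  · have hle := H.delivered_le_demand i.isLt
    rw [demand, padded_val, padded_val] at hle
    rw [phi_greedyLam, sub_nonneg, one_div, inv_mul_le_iff₀ hq]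
    linarith
  · rw [phi_greedyLam, delivered_eq_zero_of_pivot_lt h i.isLt, mul_zero, sub_zero]
    exact padded_val v 0 i ▸ H.vv_nonneg i

theorem isAlloc_greedyAlloc : IsAlloc (greedyAlloc v q) :=
  ⟨fun _ _ hab => H.monotone_dual (Fin.le_iff_val_le_val.mp hab),
    fun i => ⟨H.dual_nonneg i, H.dual_le_one i⟩⟩

theorem phi_greedyLam_eq_zero_of_greedyAlloc_lt_one {i : Fin m} (hi : greedyAlloc v q i < 1) :
    phi v q (greedyLam v q) i = 0 := by
  refine phi_greedyLam_of_lt_pivot H (not_le.mp fun h => hi.ne ?_)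
  exact dual_of_pivot_le h

theorem greedyLam_spends_on_best {k s i : Fin m} (hik : i ≤ k) (hs : 0 < greedyLam v q k s) :
    (v k - v i) * greedyAlloc v q i ≤ (v k - v s) * greedyAlloc v q s := by
  have := H.gain_le_gain_of_mult_pos k.isLt (Fin.le_iff_val_le_val.mp hik) hs
  simpa only [gain, padded_val, greedyAlloc] using this

theorem greedyLam_eq_zero_of_exists_phi_pos {k i : Fin m}
    (hex : ∃ j : Fin m, j < i ∧ 0 < q j * phi v q (greedyLam v q) j) : greedyLam v q k i = 0 := by
  obtain ⟨j, hji, hpos⟩ := hex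
  have hjP : pivot m (padded v 0) (padded q 1) ≤ j := by
    by_contra! h
    rw [phi_greedyLam_of_lt_pivot H h, mul_zero] at hpos
    exact lt_irrefl 0 hpos
  exact mult_eq_zero_of_pivot_lt (lt_of_le_of_lt hjP hji) i.isLt k.isLt

omit H in
theorem greedyLam_noncrossing (i j k l : Fin m) (hij : i < j) (hjk : j < k) (hkl : k < l) :
    ¬(0 < greedyLam v q l i ∧ 0 < greedyLam v q k j) :=
  not_mult_pos_and_mult_pos hij hjk hkl l.isLt

end FinLevel

end Greedy

theorem exists_optimal_multiplier_three_properties_general (m : ℕ) (v q : Fin m → ℝ)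
    (hv0 : ∀ i, 0 ≤ v i) (hvmono : ∀ i j : Fin m, i < j → v i < v j)
    (hq : ∀ i, 0 < q i) :
    ∃ lam : Fin m → Fin m → ℝ, IsMultiplier lam ∧
      (∀ lam' : Fin m → Fin m → ℝ, IsMultiplier lam' → g v q lam ≤ g v q lam') ∧
      (∀ i, 0 ≤ phi v q lam i) ∧
      (∀ i j k l : Fin m, i < j → j < k → k < l → ¬(0 < lam l i ∧ 0 < lam k j)) ∧
      (∀ k i : Fin m, (∃ j : Fin m, j < i ∧ 0 < q j * phi v q lam j) → lam k i = 0) := by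
  have H := Greedy.admissible_padded hv0 hvmono hq
  refine ⟨Greedy.greedyLam v q, Greedy.isMultiplier_greedyLam, fun lam' hlam' => ?_,
    Greedy.phi_greedyLam_nonneg H, Greedy.greedyLam_noncrossing,
    fun k i hex => Greedy.greedyLam_eq_zero_of_exists_phi_pos H hex⟩
  exact Greedy.isMultiplier_greedyLam.g_le_of_certificate hq (Greedy.isAlloc_greedyAlloc H)
    (Greedy.phi_greedyLam_nonneg H)
    (fun _ => Greedy.phi_greedyLam_eq_zero_of_greedyAlloc_lt_one H)
    (fun _ _ _ => Greedy.greedyLam_spends_on_best H) hlam'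

/-- There exists an optimal multiplier simultaneously satisfying:
Property 1 (`φ(i,λ) ≥ 0` for all `i`),
Property 2 (no crossings), and
Property 3 (`λ k i = 0` whenever some `j < i` has `q j · φ(j,λ) > 0`). -/
theorem exists_optimal_multiplier_three_properties (m : ℕ) (hm : 1 ≤ m) (v q : Fin m → ℝ)
    (hv0 : ∀ i, 0 ≤ v i) (hvmono : ∀ i j : Fin m, i < j → v i < v j)
    (hq : ∀ i, 0 < q i) (hqsum : ∑ i, q i = 1) :
    ∃ lam : Fin m → Fin m → ℝ, IsMultiplier lam ∧
      (∀ lam' : Fin m → Fin m → ℝ, IsMultiplier lam' → g v q lam ≤ g v q lam') ∧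
      (∀ i, 0 ≤ phi v q lam i) ∧
      (∀ i j k l : Fin m, i < j → j < k → k < l → ¬(0 < lam l i ∧ 0 < lam k j)) ∧
      (∀ k i : Fin m, (∃ j : Fin m, j < i ∧ 0 < q j * phi v q lam j) → lam k i = 0) :=
  exists_optimal_multiplier_three_properties_general m v q hv0 hvmono hq
end

section
/- Let (Ω, P) be a probability space, n ≥ 1, and let V : Fin n → Ω → α be i.i.d. random variables with values in a measurable space α. Let S ⊆ α be measurable with q := P(V 0 ∈ S) > 0, and let A : Fin n → Set Ω be pairwise disjoint measurable events. Assume the joint law is exchangeable: for every permutation σ of Fin n, the distribution of the tuple (i ↦ (V (σ i), indicator of A (σ i))) equals the distribution of (i ↦ (V i, indicator of A i)). Then for every buyer i, P(A i ∩ {V i ∈ S}) / P(V i ∈ S) ≤ (1 − (1 − q)^n) / (n · q). -/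
/-!
Write `B j = A j ∩ {V j ∈ S}`. Exchangeability makes the `B j` equiprobable and the `V j`
identically distributed. The `B j` are disjoint and each lies in `{V j ∈ S}`, so
`n · P(B i) = P(⋃ j, B j) ≤ P(∃ j, V j ∈ S) = 1 - (1 - q)ⁿ`, the last step by independence.
-/

open MeasureTheory ProbabilityTheory

namespace ProbabilityTheory

variable {Ω ι β : Type*} [MeasurableSpace Ω] [MeasurableSpace β] {P : Measure Ω}

theorem identDistrib_of_exchangeable [DecidableEq ι] {X : ι → Ω → β}
    (hX : ∀ i, Measurable (X i))
    (hexch : ∀ σ : Equiv.Perm ι, P.map (fun ω i => X (σ i) ω) = P.map (fun ω i => X i ω))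
    (i j : ι) : IdentDistrib (X i) (X j) P P := by
  refine ⟨(hX i).aemeasurable, (hX j).aemeasurable, ?_⟩
  have h := congrArg (Measure.map (Function.eval j)) (hexch (Equiv.swap i j))
  rw [Measure.map_map (measurable_pi_apply j) (measurable_pi_lambda _ fun k => hX _),
    Measure.map_map (measurable_pi_apply j) (measurable_pi_lambda _ hX), Function.comp_def,
    Function.comp_def] at h
  simpa only [Equiv.swap_apply_right] using h

theorem iIndepFun.measureReal_iUnion_preimage [IsProbabilityMeasure P] [Fintype ι]
    {X : ι → Ω → β} (hindep : iIndepFun X P) (hX : ∀ i, Measurable (X i))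
    {S : Set β} (hS : MeasurableSet S) {q : ℝ} (hq : ∀ i, P.real (X i ⁻¹' S) = q) :
    P.real (⋃ i, X i ⁻¹' S) = 1 - (1 - q) ^ Fintype.card ι := by
  have hcompl : ∀ i, P.real (X i ⁻¹' Sᶜ) = 1 - q := fun i => by
    rw [Set.preimage_compl, measureReal_compl (hX i hS), probReal_univ, hq]
  have hinter : P.real (⋂ i, X i ⁻¹' Sᶜ) = (1 - q) ^ Fintype.card ι := by
    have h := hindep.measure_inter_preimage_eq_mul Finset.univ (sets := fun _ => Sᶜ)
      (fun _ _ => hS.compl)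
    simp only [Finset.mem_univ, Set.iInter_true] at h
    rw [measureReal_def, h, ENNReal.toReal_prod]
    simp_rw [← measureReal_def, hcompl, Finset.prod_const, Finset.card_univ]
  rw [← hinter, ← probReal_compl_eq_one_sub (MeasurableSet.iInter fun i => hX i hS.compl),
    Set.compl_iInter]
  simp_rw [Set.preimage_compl, compl_compl]

end ProbabilityTheory

theorem Set.preimage_prodMk_indicator_one {Ω α : Type*} (V : Ω → α) (A : Set Ω) (S : Set α) :
    (fun ω => (V ω, A.indicator (fun _ => (1 : ℝ)) ω)) ⁻¹' (S ×ˢ {1}) = A ∩ V ⁻¹' S := by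
  ext ω
  by_cases hω : ω ∈ A <;> simp [hω, and_comm]

theorem symmetric_auction_conditional_win_bound_general
    {Ω α : Type*} [MeasurableSpace Ω] [MeasurableSpace α]
    (P : Measure Ω) [IsProbabilityMeasure P]
    (n : ℕ) (hn : 1 ≤ n)
    (V : Fin n → Ω → α) (hVmeas : ∀ i, Measurable (V i))
    (hindep : iIndepFun V P)
    (S : Set α) (hS : MeasurableSet S)
    (q : ℝ) (hq : q = (P (V ⟨0, hn⟩ ⁻¹' S)).toReal)
    (A : Fin n → Set Ω) (hAmeas : ∀ i, MeasurableSet (A i))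
    (hdisj : Pairwise (Function.onFun Disjoint A))
    (hexch : ∀ σ : Equiv.Perm (Fin n),
      P.map (fun ω => fun i : Fin n =>
          (V (σ i) ω, Set.indicator (A (σ i)) (fun _ => (1 : ℝ)) ω))
        = P.map (fun ω => fun i : Fin n =>
          (V i ω, Set.indicator (A i) (fun _ => (1 : ℝ)) ω)))
    (i : Fin n) :
    (P (A i ∩ V i ⁻¹' S)).toReal / (P (V i ⁻¹' S)).toReal
      ≤ (1 - (1 - q) ^ n) / (n * q) := by
  have hlaw := identDistrib_of_exchangeable
    (fun k => (hVmeas k).prodMk (measurable_const.indicator (hAmeas k))) hexch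
  have hwin (j : Fin n) : P.real (A j ∩ V j ⁻¹' S) = P.real (A i ∩ V i ⁻¹' S) := by
    simp_rw [measureReal_def, ← Set.preimage_prodMk_indicator_one]
    rw [(hlaw j i).measure_mem_eq (hS.prod (measurableSet_singleton 1))]
  have hval (j : Fin n) : P.real (V j ⁻¹' S) = q := by
    have h := (hlaw j ⟨0, hn⟩).measure_mem_eq (hS.prod MeasurableSet.univ)
    rw [Set.prod_univ] at h
    rw [hq, measureReal_def]
    exact congrArg ENNReal.toReal h
  have hunion : n * P.real (A i ∩ V i ⁻¹' S) ≤ 1 - (1 - q) ^ n := calc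
    _ = P.real (⋃ j, A j ∩ V j ⁻¹' S) := by
      rw [measureReal_iUnion_fintype
        (fun j k hjk => (hdisj hjk).mono Set.inter_subset_left Set.inter_subset_left)
        (fun j => (hAmeas j).inter (hVmeas j hS))]
      simp [hwin]
    _ ≤ P.real (⋃ j, V j ⁻¹' S) :=
      measureReal_mono (Set.iUnion_mono fun _ => Set.inter_subset_right)
    _ = 1 - (1 - q) ^ n := by simpa using hindep.measureReal_iUnion_preimage hVmeas hS hval
  have hn0 : (n : ℝ) ≠ 0 := Nat.cast_ne_zero.mpr (by omega)
  rw [← measureReal_def, ← measureReal_def, hval i, ← mul_div_mul_left _ q hn0]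
  exact div_le_div_of_nonneg_right hunion (mul_nonneg n.cast_nonneg (hq ▸ ENNReal.toReal_nonneg))

/-- In a single-round, single-item auction with `n` i.i.d. buyers treated symmetrically
(exchangeable joint law of values and allocations), for any measurable set `S` of values
with `q := P(V 0 ∈ S) > 0`, each buyer `i` wins with probability at most
`(1 − (1 − q)^n) / (n q)` conditioned on `V i ∈ S`. -/
theorem symmetric_auction_conditional_win_bound
    {Ω α : Type*} [MeasurableSpace Ω] [MeasurableSpace α]
    (P : Measure Ω) [IsProbabilityMeasure P]
    (n : ℕ) (hn : 1 ≤ n)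
    (V : Fin n → Ω → α) (hVmeas : ∀ i, Measurable (V i))
    (hindep : iIndepFun V P)
    (hident : ∀ i, P.map (V i) = P.map (V ⟨0, hn⟩))
    (S : Set α) (hS : MeasurableSet S)
    (q : ℝ) (hq : q = (P (V ⟨0, hn⟩ ⁻¹' S)).toReal) (hqpos : 0 < q)
    (A : Fin n → Set Ω) (hAmeas : ∀ i, MeasurableSet (A i))
    (hdisj : Pairwise (Function.onFun Disjoint A))
    (hexch : ∀ σ : Equiv.Perm (Fin n),
      P.map (fun ω => fun i : Fin n =>
          (V (σ i) ω, Set.indicator (A (σ i)) (fun _ => (1 : ℝ)) ω))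
        = P.map (fun ω => fun i : Fin n =>
          (V i ω, Set.indicator (A i) (fun _ => (1 : ℝ)) ω)))
    (i : Fin n) :
    (P (A i ∩ V i ⁻¹' S)).toReal / (P (V i ⁻¹' S)).toReal
      ≤ (1 - (1 - q) ^ n) / (n * q) :=
  symmetric_auction_conditional_win_bound_general P n hn V hVmeas hindep S hS q hq A hAmeas hdisj
    hexch i
end
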